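/- arXiv:2408.04573 — 12 statements merged into one kernel-verified Lean document; each statement's English description precedes it below -/
import Mathlib

section
/- Let X be a set and M a monoid (under composition, containing the identity) of pairwise commuting transformations of X. If ≿ is an M-invariant preorder on X, then the relation ≽ defined by x ≽ y iff there exists ω ∈ M with ω(x) ≿ ω(y) is a transitive extension of ≿ that is strongly M-invariant, i.e., for all ω ∈ M, x ≽ y iff ω(x) ≽ ω(y), and x strictly-≽ y iff ω(x) strictly-≽ ω(y). -/
/-- For a commutative monoid M of transformations and an M-invariant
preorder r, the relation R x y ↔ ∃ ω ∈ M, r (ω x) (ω y) is a transitive extension of r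
that is strongly M-invariant. -/
theorem stmt_1 {X : Type*} (M : Set (X → X))
    (hid : id ∈ M) (hcomp : ∀ ω ∈ M, ∀ ω' ∈ M, ω ∘ ω' ∈ M)
    (hcomm : ∀ ω ∈ M, ∀ ω' ∈ M, ω ∘ ω' = ω' ∘ ω)
    (r : X → X → Prop) (hrefl : ∀ x, r x x)
    (htrans : ∀ x y z, r x y → r y z → r x z)
    (hinvw : ∀ ω ∈ M, ∀ x y, r x y → r (ω x) (ω y))
    (hinvs : ∀ ω ∈ M, ∀ x y, r x y → ¬ r y x → r (ω x) (ω y) ∧ ¬ r (ω y) (ω x))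
    (R : X → X → Prop) (hR : ∀ x y, R x y ↔ ∃ ω ∈ M, r (ω x) (ω y)) :
    (∀ x y z, R x y → R y z → R x z) ∧
    (∀ x y, r x y → R x y) ∧
    (∀ x y, r x y → ¬ r y x → R x y ∧ ¬ R y x) ∧
    (∀ ω ∈ M, ∀ x y, (R x y ↔ R (ω x) (ω y)) ∧
      ((R x y ∧ ¬ R y x) ↔ (R (ω x) (ω y) ∧ ¬ R (ω y) (ω x)))) := by
  have key : ∀ ω ∈ M, ∀ x y, R x y ↔ R (ω x) (ω y) := by
    intro ω hω x y
    constructor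
    · intro h
      obtain ⟨ω', hω', h⟩ := (hR x y).1 h
      refine (hR _ _).2 ⟨ω', hω', ?_⟩
      have := hinvw ω hω _ _ h
      have hc := hcomm ω hω ω' hω'
      have h1 : ω (ω' x) = ω' (ω x) := congrFun hc x
      have h2 : ω (ω' y) = ω' (ω y) := congrFun hc y
      rwa [h1, h2] at this
    · intro h
      obtain ⟨ω', hω', h⟩ := (hR _ _).1 h
      exact (hR x y).2 ⟨ω' ∘ ω, hcomp ω' hω' ω hω, h⟩
  refine ⟨?_, ?_, ?_, ?_⟩
  · intro x y z hxy hyz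
    obtain ⟨ω, hω, h1⟩ := (hR x y).1 hxy
    obtain ⟨ω', hω', h2⟩ := (hR y z).1 hyz
    refine (hR x z).2 ⟨ω' ∘ ω, hcomp ω' hω' ω hω, ?_⟩
    have ha := hinvw ω' hω' _ _ h1
    have hb := hinvw ω hω _ _ h2
    have hc := hcomm ω hω ω' hω'
    have h1' : ω (ω' y) = ω' (ω y) := congrFun hc y
    have h2' : ω (ω' z) = ω' (ω z) := congrFun hc z
    rw [h1', h2'] at hb
    exact htrans _ _ _ ha hb
  · intro x y h
    exact (hR x y).2 ⟨id, hid, h⟩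
  · intro x y h h'
    refine ⟨(hR x y).2 ⟨id, hid, h⟩, fun hc => ?_⟩
    obtain ⟨ω, hω, hc⟩ := (hR y x).1 hc
    exact (hinvs ω hω x y h h').2 hc
  · intro ω hω x y
    exact ⟨key ω hω x y, by rw [key ω hω x y, key ω hω y x]⟩
end

section
/- Let X be a set and M a commutative monoid of transformations of X. A pair of relations ⟨≿ᴿ, ≻ᴿ⟩ on X (with ≻ᴿ ⊆ ≿ᴿ, ≿ᴿ reflexive) is rationalizable by an M-invariant total preorder (i.e., there exists a complete, transitive relation ≽ with ≿ᴿ ⊆ ≽, ≻ᴿ contained in the strict part of ≽, and for all ω ∈ M, x ≽ y implies ω(x) ≽ ω(y) and x strictly-≽ y implies ω(x) strictly-≽ ω(y)) if and only if the M-closure ⟨≿ᴿ_M, ≻ᴿ_M⟩ is acyclic. -/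
private def chainIns {X : Type*} (T : Set (X × X)) (Mset : Set (X → X)) (x y : X) :
    X → List (X → X) → X → Prop
  | p, [], q => (p, q) ∈ T
  | p, ω :: l, q => ω ∈ Mset ∧ (p, ω x) ∈ T ∧ chainIns T Mset x y (ω y) l q

private lemma chainIns_left {X : Type*} {T : Set (X × X)} {Mset : Set (X → X)} {x y : X}
    (htr : ∀ p q r : X, (p, q) ∈ T → (q, r) ∈ T → (p, r) ∈ T)
    {p p' q : X} {l : List (X → X)} (h : (p, p') ∈ T)
    (hc : chainIns T Mset x y p' l q) : chainIns T Mset x y p l q := by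
  cases l with
  | nil => exact htr _ _ _ h hc
  | cons ω l => exact ⟨hc.1, htr _ _ _ h hc.2.1, hc.2.2⟩

private lemma chainIns_append {X : Type*} {T : Set (X × X)} {Mset : Set (X → X)} {x y : X}
    (htr : ∀ p q r : X, (p, q) ∈ T → (q, r) ∈ T → (p, r) ∈ T) :
    ∀ {l : List (X → X)} {p q r : X} {l' : List (X → X)},
      chainIns T Mset x y p l q → chainIns T Mset x y q l' r →
      chainIns T Mset x y p (l ++ l') r := by
  intro l
  induction l with
  | nil => intro p q r l' h h'; exact chainIns_left htr h h'
  | cons ω l ih => intro p q r l' h h'; exact ⟨h.1, h.2.1, ih h.2.2 h'⟩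

private lemma exists_chainIns {X : Type*} {T : Set (X × X)} {Mset : Set (X → X)} {x y : X}
    (href : ∀ p : X, (p, p) ∈ T)
    (htr : ∀ p q r : X, (p, q) ∈ T → (q, r) ∈ T → (p, r) ∈ T)
    {p q : X}
    (h : Relation.TransGen (fun a b => (a, b) ∈ T ∨ ∃ ω ∈ Mset, a = ω x ∧ b = ω y) p q) :
    ∃ l, chainIns T Mset x y p l q := by
  induction h with
  | single h =>
    rcases h with h | ⟨ω, hω, rfl, rfl⟩
    · exact ⟨[], h⟩
    · exact ⟨[ω], hω, href _, href _⟩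
  | tail h1 h2 ih =>
    obtain ⟨l, hl⟩ := ih
    rcases h2 with h2 | ⟨ω, hω, rfl, rfl⟩
    · exact ⟨l ++ [], chainIns_append htr hl h2⟩
    · exact ⟨l ++ [ω], chainIns_append htr hl ⟨hω, href _, href _⟩⟩

private lemma chainIns_edges {X : Type*} {T : Set (X × X)} {Mset : Set (X → X)} {x y : X} :
    ∀ {ω₀ : X → X} {l : List (X → X)} {p q : X},
      chainIns T Mset x y p (ω₀ :: l) q →
      (∀ i, i < (ω₀ :: l).length → (ω₀ :: l).getD i id ∈ Mset) ∧
      (p, ω₀ x) ∈ T ∧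
      (∀ i, i + 1 < (ω₀ :: l).length →
        (((ω₀ :: l).getD i id) y, ((ω₀ :: l).getD (i + 1) id) x) ∈ T) ∧
      (((ω₀ :: l).getD (l.length) id) y, q) ∈ T := by
  intro ω₀ l
  induction l generalizing ω₀ with
  | nil =>
    intro p q h
    obtain ⟨hm, h1, h2⟩ := h
    refine ⟨?_, h1, ?_, h2⟩
    · intro i hi
      simp only [List.length_cons, List.length_nil] at hi
      have hi0 : i = 0 := by omega
      subst hi0
      exact hm
    · intro i hi
      simp only [List.length_cons, List.length_nil] at hi
      omega
  | cons ω₁ l ih =>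
    intro p q h
    obtain ⟨hm, h1, hrest⟩ := h
    obtain ⟨hmem, h1', hmid, hlast⟩ := ih hrest
    refine ⟨?_, h1, ?_, ?_⟩
    · intro i hi
      cases i with
      | zero => exact hm
      | succ i => exact hmem i (by simpa using hi)
    · intro i hi
      cases i with
      | zero => exact h1'
      | succ i => exact hmid i (by simpa using hi)
    · exact hlast

/-- For a commutative monoid M, the data ⟨w, s⟩ are rationalizable by an
M-invariant total preorder iff the M-closure ⟨wM, sM⟩ is acyclic. -/
theorem stmt_2 {X : Type*} (M : Set (X → X))
    (hid : id ∈ M) (hcomp : ∀ ω ∈ M, ∀ ω' ∈ M, ω ∘ ω' ∈ M)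
    (hcomm : ∀ ω ∈ M, ∀ ω' ∈ M, ω ∘ ω' = ω' ∘ ω)
    (w s : X → X → Prop) (hsub : ∀ x y, s x y → w x y) (hrefl : ∀ x, w x x)
    (wM sM : X → X → Prop)
    (hwM : ∀ a b, wM a b ↔ ∃ ω ∈ M, ∃ x y, w x y ∧ a = ω x ∧ b = ω y)
    (hsM : ∀ a b, sM a b ↔ ∃ ω ∈ M, ∃ x y, s x y ∧ a = ω x ∧ b = ω y) :
    (∃ R : X → X → Prop,
      (∀ x y, R x y ∨ R y x) ∧
      (∀ x y z, R x y → R y z → R x z) ∧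
      (∀ x y, w x y → R x y) ∧
      (∀ x y, s x y → R x y ∧ ¬ R y x) ∧
      (∀ ω ∈ M, ∀ x y, (R x y → R (ω x) (ω y)) ∧
        (R x y ∧ ¬ R y x → R (ω x) (ω y) ∧ ¬ R (ω y) (ω x)))) ↔
    ¬ ∃ a b, Relation.ReflTransGen wM a b ∧ sM b a := by
  classical
  have hcommz : ∀ ω ∈ M, ∀ τ ∈ M, ∀ z : X, ω (τ z) = τ (ω z) := by
    intro ω hω τ hτ z
    exact congrFun (hcomm ω hω τ hτ) z
  have w_wM : ∀ p q, w p q → wM p q := by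
    intro p q h
    exact (hwM p q).mpr ⟨id, hid, p, q, h, rfl, rfl⟩
  have s_sM : ∀ p q, s p q → sM p q := by
    intro p q h
    exact (hsM p q).mpr ⟨id, hid, p, q, h, rfl, rfl⟩
  have wM_comp : ∀ τ ∈ M, ∀ p q, wM p q → wM (τ p) (τ q) := by
    intro τ hτ p q h
    obtain ⟨ω, hω, x', y', hxy, rfl, rfl⟩ := (hwM _ _).mp h
    exact (hwM _ _).mpr ⟨τ ∘ ω, hcomp τ hτ ω hω, x', y', hxy, rfl, rfl⟩
  have sM_comp : ∀ τ ∈ M, ∀ p q, sM p q → sM (τ p) (τ q) := by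
    intro τ hτ p q h
    obtain ⟨ω, hω, x', y', hxy, rfl, rfl⟩ := (hsM _ _).mp h
    exact (hsM _ _).mpr ⟨τ ∘ ω, hcomp τ hτ ω hω, x', y', hxy, rfl, rfl⟩
  have sM_wM : ∀ p q, sM p q → wM p q := by
    intro p q h
    obtain ⟨ω, hω, x', y', hxy, rfl, rfl⟩ := (hsM _ _).mp h
    exact (hwM _ _).mpr ⟨ω, hω, x', y', hsub _ _ hxy, rfl, rfl⟩
  constructor
  · rintro ⟨R, htot, htrans, hwR, hsR, hinv⟩ ⟨a, b, hab, hba⟩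
    have hreflR : ∀ z, R z z := fun z => (htot z z).elim id id
    have hwMR : ∀ p q, wM p q → R p q := by
      intro p q hpq
      obtain ⟨ω, hω, x', y', hxy, rfl, rfl⟩ := (hwM p q).mp hpq
      exact (hinv ω hω x' y').1 (hwR _ _ hxy)
    have hRTG : ∀ p q, Relation.ReflTransGen wM p q → R p q := by
      intro p q h
      induction h with
      | refl => exact hreflR p
      | tail h1 h2 ih => exact htrans _ _ _ ih (hwMR _ _ h2)
    obtain ⟨ω, hω, x', y', hxy, rfl, rfl⟩ := (hsM b a).mp hba
    exact ((hinv ω hω x' y').2 (hsR _ _ hxy)).2 (hRTG _ _ hab)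
  · intro hacyc
    set Good : Set (X × X) → Prop := fun T =>
      (∀ p : X, (p, p) ∈ T) ∧
      (∀ p q r : X, (p, q) ∈ T → (q, r) ∈ T → (p, r) ∈ T) ∧
      (∀ p q, wM p q → (p, q) ∈ T) ∧
      (∀ p q, sM p q → (q, p) ∉ T) ∧
      (∀ ω ∈ M, ∀ p q : X, (p, q) ∈ T → (ω p, ω q) ∈ T) with hGood
    have hT0 : Good {pq : X × X | Relation.ReflTransGen wM pq.1 pq.2} := by
      refine ⟨fun p => Relation.ReflTransGen.refl, ?_, ?_, ?_, ?_⟩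
      · intro p q r h1 h2; exact Relation.ReflTransGen.trans h1 h2
      · intro p q h; exact Relation.ReflTransGen.single h
      · rintro p q hpq h
        exact hacyc ⟨q, p, h, hpq⟩
      · intro ω hω p q h
        simp only [Set.mem_setOf_eq] at h ⊢
        induction h with
        | refl => exact Relation.ReflTransGen.refl
        | tail h1 h2 ih => exact ih.tail (wM_comp ω hω _ _ h2)
    have hzorn : ∀ c ⊆ {T | Good T}, IsChain (· ⊆ ·) c → c.Nonempty →
        ∃ ub ∈ {T | Good T}, ∀ s ∈ c, s ⊆ ub := by
      intro c hcS hchain hne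
      obtain ⟨t0, ht0⟩ := hne
      refine ⟨⋃₀ c, ⟨?_, ?_, ?_, ?_, ?_⟩, fun t ht => Set.subset_sUnion_of_mem ht⟩
      · intro p; exact ⟨t0, ht0, (hcS ht0).1 p⟩
      · rintro p q r ⟨t1, ht1, h1⟩ ⟨t2, ht2, h2⟩
        rcases hchain.total ht1 ht2 with h | h
        · exact ⟨t2, ht2, (hcS ht2).2.1 _ _ _ (h h1) h2⟩
        · exact ⟨t1, ht1, (hcS ht1).2.1 _ _ _ h1 (h h2)⟩
      · intro p q h; exact ⟨t0, ht0, (hcS ht0).2.2.1 p q h⟩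
      · rintro p q hpq ⟨t1, ht1, h1⟩
        exact (hcS ht1).2.2.2.1 p q hpq h1
      · rintro ω hω p q ⟨t1, ht1, h1⟩
        exact ⟨t1, ht1, (hcS ht1).2.2.2.2 ω hω p q h1⟩
    obtain ⟨T, hT0T, hTmax⟩ := zorn_subset_nonempty {T | Good T} hzorn _ hT0
    obtain ⟨hrefT, htrT, hwMT, hsMT, hinvT⟩ := hTmax.1
    -- cancellation from maximality
    have hcancel : ∀ τ ∈ M, ∀ p q : X, (τ p, τ q) ∈ T → (p, q) ∈ T := by
      intro τ hτ p q h
      have hQgood : Good {pq : X × X | ∃ σ ∈ M, (σ pq.1, σ pq.2) ∈ T} := by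
        refine ⟨?_, ?_, ?_, ?_, ?_⟩
        · intro p; exact ⟨id, hid, hrefT p⟩
        · rintro p q r ⟨σ, hσ, h1⟩ ⟨σ', hσ', h2⟩
          refine ⟨σ' ∘ σ, hcomp σ' hσ' σ hσ, ?_⟩
          have h1' : (σ' (σ p), σ' (σ q)) ∈ T := hinvT σ' hσ' _ _ h1
          have h2' : (σ (σ' q), σ (σ' r)) ∈ T := hinvT σ hσ _ _ h2
          rw [hcommz σ hσ σ' hσ' q, hcommz σ hσ σ' hσ' r] at h2'
          exact htrT _ _ _ h1' h2'
        · intro p q hpq; exact ⟨id, hid, hwMT p q hpq⟩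
        · rintro p q hpq ⟨σ, hσ, h1⟩
          exact hsMT _ _ (sM_comp σ hσ _ _ hpq) h1
        · rintro ω hω p q ⟨σ, hσ, h1⟩
          refine ⟨σ, hσ, ?_⟩
          have h1' : (ω (σ p), ω (σ q)) ∈ T := hinvT ω hω _ _ h1
          rwa [hcommz ω hω σ hσ p, hcommz ω hω σ hσ q] at h1'
      have hTQ : T ⊆ {pq : X × X | ∃ σ ∈ M, (σ pq.1, σ pq.2) ∈ T} :=
        fun pq hpq => ⟨id, hid, hpq⟩
      exact hTmax.2 hQgood hTQ ⟨τ, hτ, h⟩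
    -- totality of the maximal element
    have htotal : ∀ p q : X, (p, q) ∈ T ∨ (q, p) ∈ T := by
      by_contra hcon
      push_neg at hcon
      obtain ⟨x, y, hxy, hyx⟩ := hcon
      have hfail : ∀ u v : X, (u, v) ∉ T →
          ∃ a b, sM a b ∧
            Relation.TransGen (fun p q => (p, q) ∈ T ∨ ∃ τ ∈ M, p = τ u ∧ q = τ v) b a := by
        intro u v huv
        by_contra hno
        push_neg at hno
        have hstep : ∀ ω ∈ M, ∀ p q : X,
            ((p, q) ∈ T ∨ ∃ τ ∈ M, p = τ u ∧ q = τ v) →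
            ((ω p, ω q) ∈ T ∨ ∃ τ ∈ M, ω p = τ u ∧ ω q = τ v) := by
          rintro ω hω p q (h | ⟨τ, hτ, rfl, rfl⟩)
          · exact Or.inl (hinvT ω hω _ _ h)
          · exact Or.inr ⟨ω ∘ τ, hcomp ω hω τ hτ, rfl, rfl⟩
        have hT'good : Good {pq : X × X |
            Relation.TransGen (fun p q => (p, q) ∈ T ∨ ∃ τ ∈ M, p = τ u ∧ q = τ v) pq.1 pq.2} := by
          refine ⟨?_, ?_, ?_, ?_, ?_⟩
          · intro p; exact Relation.TransGen.single (Or.inl (hrefT p))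
          · intro p q r h1 h2; exact Relation.TransGen.trans h1 h2
          · intro p q h; exact Relation.TransGen.single (Or.inl (hwMT p q h))
          · intro p q hpq h
            exact hno p q hpq h
          · intro ω hω p q h
            simp only [Set.mem_setOf_eq] at h ⊢
            induction h with
            | single h => exact Relation.TransGen.single (hstep ω hω _ _ h)
            | tail h1 h2 ih => exact ih.tail (hstep ω hω _ _ h2)
        have hTT' : T ⊆ {pq : X × X |
            Relation.TransGen (fun p q => (p, q) ∈ T ∨ ∃ τ ∈ M, p = τ u ∧ q = τ v) pq.1 pq.2} :=
          fun pq hpq => Relation.TransGen.single (Or.inl hpq)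
        exact huv (hTmax.2 hT'good hTT'
          (Relation.TransGen.single (Or.inr ⟨id, hid, rfl, rfl⟩)))
      obtain ⟨a, b, hsab, hchain1⟩ := hfail x y hxy
      obtain ⟨a', b', hsab', hchain2⟩ := hfail y x hyx
      obtain ⟨L1, hL1⟩ := exists_chainIns hrefT htrT hchain1
      obtain ⟨L2, hL2⟩ := exists_chainIns hrefT htrT hchain2
      cases L1 with
      | nil => exact hsMT a b hsab hL1
      | cons ω₀ l1 =>
      cases L2 with
      | nil => exact hsMT a' b' hsab' hL2
      | cons ν₀ l2 =>
      obtain ⟨hmem1, hfirst1, hmid1, hlast1⟩ := chainIns_edges hL1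
      obtain ⟨hmem2, hfirst2, hmid2, hlast2⟩ := chainIns_edges hL2
      obtain ⟨m, hm⟩ : ∃ m : ℕ, m = (ω₀ :: l1).length := ⟨_, rfl⟩
      obtain ⟨n, hn⟩ : ∃ n : ℕ, n = (ν₀ :: l2).length := ⟨_, rfl⟩
      have hm1 : 1 ≤ m := by rw [hm]; simp
      have hn1 : 1 ≤ n := by rw [hn]; simp
      obtain ⟨ωf, hωf⟩ : ∃ ωf : ℕ → X → X, ∀ i, ωf i = (ω₀ :: l1).getD i id := ⟨_, fun _ => rfl⟩
      obtain ⟨ν, hν⟩ : ∃ ν : ℕ → X → X, ∀ j, ν j = (ν₀ :: l2).getD (j % n) id := ⟨_, fun _ => rfl⟩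
      have hωfM : ∀ i, i < m → ωf i ∈ M := by
        intro i hi
        rw [hm] at hi
        rw [hωf]
        exact hmem1 i hi
      have hνM : ∀ j, ν j ∈ M := by
        intro j
        have hlt : j % n < n := Nat.mod_lt _ (by omega)
        rw [hν]
        exact hmem2 _ (by rw [← hn]; exact hlt)
      have hF1 : (b, ωf 0 x) ∈ T := by rw [hωf]; exact hfirst1
      have hF2 : ∀ i, i + 1 < m → (ωf i y, ωf (i + 1) x) ∈ T := by
        intro i hi
        rw [hm] at hi
        rw [hωf, hωf]
        exact hmid1 i hi
      have hF3 : (ωf (m - 1) y, a) ∈ T := by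
        rw [hωf]
        have e : m - 1 = l1.length := by rw [hm]; simp
        rw [e]
        exact hlast1
      have hmodsucc : ∀ j : ℕ, (j + 1) % n = (j % n + 1) % n := by
        intro j
        conv_lhs => rw [Nat.add_mod]
        conv_rhs => rw [Nat.add_mod]
        rw [Nat.mod_mod_of_dvd _ dvd_rfl]
      have hU : ∀ j : ℕ, (ν j x, ν (j + 1) y) ∈ T := by
        intro j
        have hjn : j % n < n := Nat.mod_lt _ (by omega)
        by_cases hcase : j % n + 1 < n
        · have e : (j + 1) % n = j % n + 1 := by
            rw [hmodsucc j, Nat.mod_eq_of_lt hcase]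
          rw [hν j, hν (j + 1), e]
          exact hmid2 _ (by rw [← hn]; exact hcase)
        · have ej : j % n = n - 1 := by omega
          have e : (j + 1) % n = 0 := by
            rw [hmodsucc j, ej, show n - 1 + 1 = n by omega, Nat.mod_self]
          have hend : (ν j x, a') ∈ T := by
            rw [hν j, ej, show n - 1 = l2.length by rw [hn]; simp]
            exact hlast2
          have hstart : (b', ν (j + 1) y) ∈ T := by
            rw [hν (j + 1), e]
            exact hfirst2
          have hab' : (a', b') ∈ T := hwMT _ _ (sM_wM _ _ hsab')
          exact htrT _ _ _ (htrT _ _ _ hend hab') hstart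
      have hQstep : ∀ i, i < m → ∀ j, (ν j b, ν (j + i) (ωf i x)) ∈ T := by
        intro i
        induction i with
        | zero =>
          intro _ j
          exact hinvT (ν j) (hνM j) _ _ hF1
        | succ i ih =>
          intro hi j
          have h1 := ih (by omega) j
          have h2 : (ν (j + i) (ωf i x), ν (j + i + 1) (ωf i y)) ∈ T := by
            have h2' : (ωf i (ν (j + i) x), ωf i (ν (j + i + 1) y)) ∈ T :=
              hinvT (ωf i) (hωfM i (by omega)) _ _ (hU (j + i))
            rwa [hcommz (ωf i) (hωfM i (by omega)) (ν (j + i)) (hνM _) x,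
              hcommz (ωf i) (hωfM i (by omega)) (ν (j + i + 1)) (hνM _) y] at h2'
          have h3 : (ν (j + i + 1) (ωf i y), ν (j + i + 1) (ωf (i + 1) x)) ∈ T :=
            hinvT (ν (j + i + 1)) (hνM _) _ _ (hF2 i hi)
          exact htrT _ _ _ (htrT _ _ _ h1 h2) h3
      have hB : ∀ j : ℕ, (ν j b, ν (j + m) a) ∈ T := by
        intro j
        have h1 := hQstep (m - 1) (by omega) j
        have h2 : (ν (j + (m - 1)) (ωf (m - 1) x), ν (j + (m - 1) + 1) (ωf (m - 1) y)) ∈ T := by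
          have h2' : (ωf (m - 1) (ν (j + (m - 1)) x), ωf (m - 1) (ν (j + (m - 1) + 1) y)) ∈ T :=
            hinvT (ωf (m - 1)) (hωfM _ (by omega)) _ _ (hU (j + (m - 1)))
          rwa [hcommz (ωf (m - 1)) (hωfM _ (by omega)) (ν (j + (m - 1))) (hνM _) x,
            hcommz (ωf (m - 1)) (hωfM _ (by omega)) (ν (j + (m - 1) + 1)) (hνM _) y] at h2'
        have h3 : (ν (j + (m - 1) + 1) (ωf (m - 1) y), ν (j + (m - 1) + 1) a) ∈ T :=
          hinvT (ν (j + (m - 1) + 1)) (hνM _) _ _ hF3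
        have e : j + (m - 1) + 1 = j + m := by omega
        rw [e] at h2 h3
        exact htrT _ _ _ (htrT _ _ _ h1 h2) h3
      have hK : ∀ k : ℕ, (ν 0 b, ν ((k + 1) * m) a) ∈ T := by
        intro k
        induction k with
        | zero =>
          rw [show (0 + 1) * m = 0 + m by ring]
          exact hB 0
        | succ k ih =>
          have hab2 : (a, b) ∈ T := hwMT _ _ (sM_wM _ _ hsab)
          have h2 := hinvT (ν ((k + 1) * m)) (hνM _) _ _ hab2
          have h3 := hB ((k + 1) * m)
          rw [show (k + 1 + 1) * m = (k + 1) * m + m by ring]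
          exact htrT _ _ _ (htrT _ _ _ ih h2) h3
      have hfin := hK (n - 1)
      rw [show (n - 1 + 1) * m = n * m by rw [show n - 1 + 1 = n by omega]] at hfin
      have e2 : ν (n * m) a = ν 0 a := by
        rw [hν (n * m), hν 0, Nat.mul_mod_right, Nat.zero_mod]
      rw [e2] at hfin
      exact hsMT _ _ (sM_comp (ν 0) (hνM 0) a b hsab) hfin
    refine ⟨fun p q => (p, q) ∈ T, htotal, fun p q r => htrT p q r, ?_, ?_, ?_⟩
    · intro p q h
      exact hwMT p q (w_wM p q h)
    · intro p q h
      exact ⟨hwMT p q (w_wM p q (hsub p q h)), hsMT p q (s_sM p q h)⟩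
    · intro ω hω p q
      refine ⟨fun h => hinvT ω hω p q h, ?_⟩
      rintro ⟨h1, h2⟩
      exact ⟨hinvT ω hω p q h1, fun hc => h2 (hcancel ω hω q p hc)⟩
end

section
/- Every homothetic preorder on a cone X in a real vector space admits a homothetic extension to a total preorder: i.e., if ≿ is a preorder on X such that for all λ > 0, x ≿ y iff λx ≿ λy and x ≻ y iff λx ≻ λy, then there exists a complete, transitive relation ≽ extending ≿ (with the strict part of ≿ contained in the strict part of ≽) that is also homothetic. -/
/-!
Apply Zorn's lemma to the homothetic transitive relations that extend `r` and keep its strict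
part strict; it remains to see that a maximal one, `P`, is total. Let `R(x, y)`
(`ratioSet P x y`) be the set of `μ > 0` with `x ≿ μ y` in `P`, so that
`R(x, y) * R(y, z) ⊆ R(x, z)`. If `a` and `b` are incomparable, adjoining all pairs `(l a, l b)`
to `P` must create a strict reversal; unwinding the chain that produces it gives a product `t` of
elements of `R(b, a)` with `t⁻¹ ∈ R(b, a)` and `t ∉ R(a, b)`. The symmetric attempt gives `s`
with the roles of `a` and `b` exchanged. Padding `t` and `s` with the trivial cycles
`t * t⁻¹ = 1` and `s * s⁻¹ = 1` makes them products of equally many factors, hence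
`t * s ∈ R(b, b)` and `t = s⁻¹ * (t * s) ∈ R(a, b)`, a contradiction.
-/

open Pointwise

section

variable {V : Type*} [AddCommGroup V] [Module ℝ V]

structure IsHomotheticExtension (X : Set V) (r : V → V → Prop) (P : Set (V × V)) : Prop where
  trans : ∀ ⦃x y z⦄, (x, y) ∈ P → (y, z) ∈ P → (x, z) ∈ P
  smul_mem : ∀ ⦃l : ℝ⦄, 0 < l → ∀ ⦃x y⦄, (x, y) ∈ P → (l • x, l • y) ∈ P
  mem_of_rel : ∀ ⦃x⦄, x ∈ X → ∀ ⦃y⦄, y ∈ X → r x y → (x, y) ∈ P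
  not_mem_of_strict : ∀ ⦃x⦄, x ∈ X → ∀ ⦃y⦄, y ∈ X → r x y → ¬ r y x → (y, x) ∉ P

def ratioSet (P : Set (V × V)) (x y : V) : Set ℝ := {μ | 0 < μ ∧ (x, μ • y) ∈ P}

/-- The transitive closure of `P ∪ {(l • a, l • b) | l > 0}` for transitive homothetic `P`, in
normal form: a chain `x ≿ l a, l b ≿ l μ₁ a, l μ₁ b ≿ l μ₁ μ₂ a, …, l t b ≿ y`
with `μᵢ ∈ R(b, a)`. -/
def adjoinRays (P : Set (V × V)) (a b : V) : Set (V × V) :=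
  P ∪ {p | ∃ l, 0 < l ∧ ∃ k, ∃ t ∈ ratioSet P b a ^ k, (p.1, l • a) ∈ P ∧ ((l * t) • b, p.2) ∈ P}

theorem pos_of_mem_ratioSet_pow {P : Set (V × V)} {x y : V} {k : ℕ} {t : ℝ}
    (ht : t ∈ ratioSet P x y ^ k) : 0 < t :=
  Submonoid.pow_subset (S := Submonoid.pos ℝ) (fun _ hμ => hμ.1) ht

namespace IsHomotheticExtension

variable {X : Set V} {r : V → V → Prop} {P : Set (V × V)}

theorem smul_mem_iff (h : IsHomotheticExtension X r P) {l : ℝ} (hl : 0 < l) {x y : V} :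
    (l • x, l • y) ∈ P ↔ (x, y) ∈ P := by
  refine ⟨fun hxy => ?_, fun hxy => h.smul_mem hl hxy⟩
  simpa [smul_smul, inv_mul_cancel₀ hl.ne'] using h.smul_mem (inv_pos.mpr hl) hxy

theorem div_mem_ratioSet (h : IsHomotheticExtension X r P) {l m : ℝ} (hl : 0 < l) (hm : 0 < m)
    {x y : V} (hxy : (l • x, m • y) ∈ P) : m / l ∈ ratioSet P x y := by
  refine ⟨div_pos hm hl, (h.smul_mem_iff hl).mp ?_⟩
  rwa [smul_smul, mul_div_cancel₀ m hl.ne']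

theorem smul_mem_of_mem_ratioSet (h : IsHomotheticExtension X r P) {l μ : ℝ} (hl : 0 < l)
    {x y : V} (hμ : μ ∈ ratioSet P x y) : (l • x, (l * μ) • y) ∈ P := by
  simpa [smul_smul] using h.smul_mem hl hμ.2

theorem ratioSet_mul_subset (h : IsHomotheticExtension X r P) (x y z : V) :
    ratioSet P x y * ratioSet P y z ⊆ ratioSet P x z := by
  rintro _ ⟨ν, hν, μ, hμ, rfl⟩
  exact ⟨mul_pos hν.1 hμ.1, h.trans hν.2 (h.smul_mem_of_mem_ratioSet hν.1 hμ)⟩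

theorem ratioSet_pow_mul_pow_subset (h : IsHomotheticExtension X r P) {x : V} (hx : (x, x) ∈ P)
    (y : V) (n : ℕ) : ratioSet P x y ^ n * ratioSet P y x ^ n ⊆ ratioSet P x x := by
  induction n with
  | zero => simpa using ⟨one_pos, by simpa using hx⟩
  | succ n ih =>
    rw [pow_succ, pow_succ, mul_mul_mul_comm]
    exact (Set.mul_subset_mul ih (h.ratioSet_mul_subset x y x)).trans
      (h.ratioSet_mul_subset x x x)

theorem mem_ratioSet_of_inv_mem (h : IsHomotheticExtension X r P) {a b : V} (hb : (b, b) ∈ P)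
    {k m : ℕ} {t s : ℝ} (ht : t ∈ ratioSet P b a ^ k) (ht' : t⁻¹ ∈ ratioSet P b a)
    (hs : s ∈ ratioSet P a b ^ m) (hs' : s⁻¹ ∈ ratioSet P a b) : t ∈ ratioSet P a b := by
  -- `t ∈ A ^ k` times `(t * t⁻¹) ^ m` lies in `A ^ (k + (k + 1) m)`, and symmetrically `s` lies in
  -- `B ^ (m + (m + 1) k)`: the same exponent, so the factors of `t * s` pair up.
  have hpad : ∀ {c : ℝ} {A : Set ℝ} {j : ℕ} (p : ℕ), c ≠ 0 → c ∈ A ^ j → c⁻¹ ∈ A →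
      c ∈ A ^ (j + (j + 1) * p) := by
    intro c A j p hc0 hc hc'
    have h1 := Set.mul_mem_mul hc hc'
    rw [mul_inv_cancel₀ hc0, ← pow_succ] at h1
    simpa [pow_add, pow_mul] using Set.mul_mem_mul hc (Set.pow_mem_pow (n := p) h1)
  have hts : t * s ∈ ratioSet P b b := by
    refine h.ratioSet_pow_mul_pow_subset hb a _
      (Set.mul_mem_mul (hpad m (inv_pos.mp ht'.1).ne' ht ht') ?_)
    convert hpad k (inv_pos.mp hs'.1).ne' hs hs' using 2
    ring
  convert h.ratioSet_mul_subset a b b (Set.mul_mem_mul hs' hts) using 1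
  field_simp [(inv_pos.mp hs'.1).ne']

theorem adjoinRays_trans (h : IsHomotheticExtension X r P) {a b x y z : V}
    (hxy : (x, y) ∈ adjoinRays P a b) (hyz : (y, z) ∈ adjoinRays P a b) :
    (x, z) ∈ adjoinRays P a b := by
  rcases hxy with hxy | ⟨l, hl, k, t, ht, hxa, hby⟩ <;>
    rcases hyz with hyz | ⟨l', hl', k', t', ht', hya, hbz⟩
  · exact Or.inl (h.trans hxy hyz)
  · exact Or.inr ⟨l', hl', k', t', ht', h.trans hxy hya, hbz⟩
  · exact Or.inr ⟨l, hl, k, t, ht, hxa, h.trans hby hyz⟩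
  · have hlt := mul_pos hl (pos_of_mem_ratioSet_pow ht)
    have hμ := h.div_mem_ratioSet hlt hl' (h.trans hby hya)
    refine Or.inr ⟨l, hl, k + 1 + k', t * (l' / (l * t)) * t', ?_, hxa, ?_⟩
    · rw [pow_add, pow_succ]
      exact Set.mul_mem_mul (Set.mul_mem_mul ht hμ) ht'
    · convert hbz using 3
      field_simp [(pos_of_mem_ratioSet_pow ht).ne']

theorem smul_mem_adjoinRays (h : IsHomotheticExtension X r P) {a b x y : V} {c : ℝ} (hc : 0 < c)
    (hxy : (x, y) ∈ adjoinRays P a b) : (c • x, c • y) ∈ adjoinRays P a b := by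
  rcases hxy with hxy | ⟨l, hl, k, t, ht, hxa, hby⟩
  · exact Or.inl (h.smul_mem hc hxy)
  · refine Or.inr ⟨c * l, mul_pos hc hl, k, t, ht, ?_, ?_⟩
    · simpa [smul_smul] using h.smul_mem hc hxa
    · simpa [smul_smul, mul_assoc] using h.smul_mem hc hby

theorem adjoinRays_isHomotheticExtension (h : IsHomotheticExtension X r P) {a b : V}
    (hab : ∀ k, ∀ t ∈ ratioSet P b a ^ k, t⁻¹ ∈ ratioSet P b a → t ∈ ratioSet P a b) :
    IsHomotheticExtension X r (adjoinRays P a b) where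
  trans _ _ _ := h.adjoinRays_trans
  smul_mem _ hc _ _ := h.smul_mem_adjoinRays hc
  mem_of_rel _ hx _ hy hxy := Or.inl (h.mem_of_rel hx hy hxy)
  not_mem_of_strict x hx y hy hxy hyx := by
    rintro (hyx' | ⟨l, hl, k, t, ht, hya, hbx⟩)
    · exact h.not_mem_of_strict hx hy hxy hyx hyx'
    · have hlt := mul_pos hl (pos_of_mem_ratioSet_pow ht)
      have hinv := h.div_mem_ratioSet hlt hl (h.trans hbx (h.trans (h.mem_of_rel hx hy hxy) hya))
      rw [div_mul_cancel_left₀ hl.ne'] at hinv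
      exact h.not_mem_of_strict hx hy hxy hyx
        (h.trans hya (h.trans (h.smul_mem_of_mem_ratioSet hl (hab k t ht hinv)) hbx))

theorem mem_adjoinRays {a b : V} (ha : (a, a) ∈ P) (hb : (b, b) ∈ P) :
    (a, b) ∈ adjoinRays P a b :=
  Or.inr ⟨1, one_pos, 0, 1, by simp, by simpa using ha, by simpa using hb⟩

theorem exists_pow_mem_ratioSet_of_maximal (hP : Maximal (IsHomotheticExtension X r) P)
    {a b : V} (ha : (a, a) ∈ P) (hb : (b, b) ∈ P) (hab : (a, b) ∉ P) :
    ∃ k, ∃ t ∈ ratioSet P b a ^ k, t⁻¹ ∈ ratioSet P b a ∧ t ∉ ratioSet P a b := by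
  by_contra! hne
  exact hab (hP.2 (hP.1.adjoinRays_isHomotheticExtension hne) Set.subset_union_left
    (mem_adjoinRays ha hb))

theorem total_of_maximal (hP : Maximal (IsHomotheticExtension X r) P) {a b : V}
    (ha : (a, a) ∈ P) (hb : (b, b) ∈ P) : (a, b) ∈ P ∨ (b, a) ∈ P := by
  by_contra! ⟨hab, hba⟩
  obtain ⟨k, t, ht, ht', htab⟩ := exists_pow_mem_ratioSet_of_maximal hP ha hb hab
  obtain ⟨m, s, hs, hs', -⟩ := exists_pow_mem_ratioSet_of_maximal hP hb ha hba
  exact htab (hP.1.mem_ratioSet_of_inv_mem hb ht ht' hs hs')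

theorem sUnion {c : Set (Set (V × V))} (hc : ∀ P ∈ c, IsHomotheticExtension X r P)
    (hchain : IsChain (· ⊆ ·) c) (hne : c.Nonempty) : IsHomotheticExtension X r (⋃₀ c) where
  trans x y z := by
    rintro ⟨P, hP, hxy⟩ ⟨Q, hQ, hyz⟩
    rcases hchain.total hP hQ with hPQ | hQP
    · exact ⟨Q, hQ, (hc Q hQ).trans (hPQ hxy) hyz⟩
    · exact ⟨P, hP, (hc P hP).trans hxy (hQP hyz)⟩
  smul_mem l hl x y := by
    rintro ⟨P, hP, hxy⟩
    exact ⟨P, hP, (hc P hP).smul_mem hl hxy⟩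
  mem_of_rel x hx y hy hxy :=
    let ⟨P, hP⟩ := hne
    ⟨P, hP, (hc P hP).mem_of_rel hx hy hxy⟩
  not_mem_of_strict x hx y hy hxy hyx := by
    rintro ⟨P, hP, hyx'⟩
    exact (hc P hP).not_mem_of_strict hx hy hxy hyx hyx'

theorem exists_maximal (h : IsHomotheticExtension X r P) :
    ∃ Q, P ⊆ Q ∧ Maximal (IsHomotheticExtension X r) Q :=
  zorn_subset_nonempty {Q | IsHomotheticExtension X r Q}
    (fun _ hc hchain hne => ⟨_, sUnion hc hchain hne, fun _ => Set.subset_sUnion_of_mem⟩) P h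

end IsHomotheticExtension

theorem isHomotheticExtension_restrict {X : Set V} {r : V → V → Prop}
    (hcone : ∀ x ∈ X, ∀ l : ℝ, 0 < l → l • x ∈ X)
    (htrans : ∀ x ∈ X, ∀ y ∈ X, ∀ z ∈ X, r x y → r y z → r x z)
    (hsmul : ∀ x ∈ X, ∀ y ∈ X, ∀ l : ℝ, 0 < l → r x y → r (l • x) (l • y)) :
    IsHomotheticExtension X r {p | p.1 ∈ X ∧ p.2 ∈ X ∧ r p.1 p.2} where
  trans _ _ _ := fun ⟨hx, hy, hxy⟩ ⟨_, hz, hyz⟩ => ⟨hx, hz, htrans _ hx _ hy _ hz hxy hyz⟩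
  smul_mem l hl _ _ := fun ⟨hx, hy, hxy⟩ =>
    ⟨hcone _ hx l hl, hcone _ hy l hl, hsmul _ hx _ hy l hl hxy⟩
  mem_of_rel _ hx _ hy hxy := ⟨hx, hy, hxy⟩
  not_mem_of_strict _ _ _ _ _ hyx := fun ⟨_, _, hyx'⟩ => hyx hyx'

end

/-- Every homothetic preorder on a cone X in a real vector space admits a
homothetic extension to a complete transitive relation on X. -/
theorem stmt_3 {V : Type*} [AddCommGroup V] [Module ℝ V] (X : Set V)
    (hcone : ∀ x ∈ X, ∀ l : ℝ, 0 < l → l • x ∈ X)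
    (r : V → V → Prop)
    (hrefl : ∀ x ∈ X, r x x)
    (htrans : ∀ x ∈ X, ∀ y ∈ X, ∀ z ∈ X, r x y → r y z → r x z)
    (hhom : ∀ x ∈ X, ∀ y ∈ X, ∀ l : ℝ, 0 < l →
      (r x y ↔ r (l • x) (l • y)) ∧
      ((r x y ∧ ¬ r y x) ↔ (r (l • x) (l • y) ∧ ¬ r (l • y) (l • x)))) :
    ∃ R : V → V → Prop,
      (∀ x ∈ X, ∀ y ∈ X, R x y ∨ R y x) ∧
      (∀ x ∈ X, ∀ y ∈ X, ∀ z ∈ X, R x y → R y z → R x z) ∧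
      (∀ x ∈ X, ∀ y ∈ X, r x y → R x y) ∧
      (∀ x ∈ X, ∀ y ∈ X, r x y → ¬ r y x → R x y ∧ ¬ R y x) ∧
      (∀ x ∈ X, ∀ y ∈ X, ∀ l : ℝ, 0 < l →
        (R x y → R (l • x) (l • y)) ∧
        (R x y ∧ ¬ R y x → R (l • x) (l • y) ∧ ¬ R (l • y) (l • x))) := by
  obtain ⟨P, -, hP⟩ := (isHomotheticExtension_restrict hcone htrans
    fun x hx y hy l hl => (hhom x hx y hy l hl).1.mp).exists_maximal
  have h := hP.1
  have hdiag : ∀ x ∈ X, (x, x) ∈ P := fun x hx => h.mem_of_rel hx hx (hrefl x hx)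
  refine ⟨fun x y => (x, y) ∈ P, fun x hx y hy =>
    IsHomotheticExtension.total_of_maximal hP (hdiag x hx) (hdiag y hy),
    fun _ _ _ _ _ _ hxy hyz => h.trans hxy hyz, fun _ hx _ hy => h.mem_of_rel hx hy,
    fun _ hx _ hy hxy hyx => ⟨h.mem_of_rel hx hy hxy, h.not_mem_of_strict hx hy hxy hyx⟩,
    fun _ _ _ _ _ hl => ⟨fun hxy => h.smul_mem hl hxy,
      fun ⟨hxy, hyx⟩ => ⟨h.smul_mem hl hxy, mt (h.smul_mem_iff hl).mp hyx⟩⟩⟩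
end

section
/- Let V be a real vector space, C ⊆ V a cone, and X ⊆ V closed under addition by elements of C. Every C-additive preorder ≿ on X (for all c ∈ C: x ≿ y implies x + c ≿ y + c, and x ≻ y implies x + c ≻ y + c) admits an extension to a complete, transitive, C-additive relation on X. -/
/- Auxiliary development for stmt_4: Szpilrajn-type extension with cone-additivity. -/

section StmtFourAux

variable {V : Type*} [AddCommGroup V]

/-- A "good" relation-set: subset of X×X, contains r, preserves strict part of r,
transitive, and additive with respect to the translation set T. -/
private def GoodRel (X T : Set V) (r : V → V → Prop) (Q : Set (V × V)) : Prop :=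
  (∀ p ∈ Q, p.1 ∈ X ∧ p.2 ∈ X) ∧
  (∀ x ∈ X, ∀ y ∈ X, r x y → (x, y) ∈ Q) ∧
  (∀ x ∈ X, ∀ y ∈ X, r x y → ¬ r y x → (y, x) ∉ Q) ∧
  (∀ x y z : V, (x, y) ∈ Q → (y, z) ∈ Q → (x, z) ∈ Q) ∧
  (∀ t ∈ T, ∀ x y : V, (x, y) ∈ Q → (x + t, y + t) ∈ Q)

/-- If M is maximal good and (p,q) ∉ M, then the transitive closure of M together with all
T-translates of the edge (p,q) must violate the strict part of r. -/
private lemma addPair_viol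
    (X T : Set V) (r : V → V → Prop) (M : Set (V × V))
    (hT0 : (0:V) ∈ T)
    (hTadd : ∀ a ∈ T, ∀ b ∈ T, a + b ∈ T)
    (hXT : ∀ x ∈ X, ∀ t ∈ T, x + t ∈ X)
    (hmax : Maximal (GoodRel X T r) M)
    (p q : V) (hp : p ∈ X) (hq : q ∈ X) (hpq : (p, q) ∉ M) :
    ∃ a b, a ∈ X ∧ b ∈ X ∧ r a b ∧ ¬ r b a ∧
      Relation.TransGen (fun u v => (u, v) ∈ M ∨ ∃ t ∈ T, u = p + t ∧ v = q + t) b a := by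
  by_contra hcon
  push_neg at hcon
  have hGM := hmax.1
  set E : V → V → Prop := fun u v => (u, v) ∈ M ∨ ∃ t ∈ T, u = p + t ∧ v = q + t with hE
  set N : Set (V × V) := {pr | Relation.TransGen E pr.1 pr.2} with hN
  have hMN : M ⊆ N := by
    intro pr hpr
    have : Relation.TransGen E pr.1 pr.2 := Relation.TransGen.single (Or.inl hpr)
    exact this
  have hmemN : ∀ a b : V, Relation.TransGen E a b → a ∈ X ∧ b ∈ X := by
    intro a b h
    induction h with
    | single e =>
      rcases e with h | ⟨t, ht, rfl, rfl⟩
      · exact hGM.1 _ h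
      · exact ⟨hXT p hp t ht, hXT q hq t ht⟩
    | tail h1 e ih =>
      refine ⟨ih.1, ?_⟩
      rcases e with h | ⟨t, ht, rfl, rfl⟩
      · exact (hGM.1 _ h).2
      · exact hXT q hq t ht
  have htransE : ∀ t ∈ T, ∀ a b : V, E a b → E (a + t) (b + t) := by
    intro t ht a b e
    rcases e with h | ⟨t', ht', rfl, rfl⟩
    · exact Or.inl (hGM.2.2.2.2 t ht _ _ h)
    · exact Or.inr ⟨t' + t, hTadd t' ht' t ht, by rw [add_assoc], by rw [add_assoc]⟩
  have hGN : GoodRel X T r N := by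
    refine ⟨fun pr hpr => hmemN pr.1 pr.2 hpr, ?_, ?_, ?_, ?_⟩
    · intro x hx y hy hr
      exact hMN (hGM.2.1 x hx y hy hr)
    · intro x hx y hy hr hnr hmem
      exact hcon x y hx hy hr hnr hmem
    · intro x y z h1 h2
      exact Relation.TransGen.trans h1 h2
    · intro t ht x y h
      have h' : Relation.TransGen E x y := h
      clear h
      show Relation.TransGen E (x + t) (y + t)
      induction h' with
      | single e => exact Relation.TransGen.single (htransE t ht _ _ e)
      | tail h1 e ih => exact Relation.TransGen.tail ih (htransE t ht _ _ e)
  have hNM : N ⊆ M := hmax.2 hGN hMN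
  have hpqN : (p, q) ∈ N := by
    have : Relation.TransGen E p q :=
      Relation.TransGen.single (Or.inr ⟨0, hT0, by rw [add_zero], by rw [add_zero]⟩)
    exact this
  exact hpq (hNM hpqN)

/-- Extract an alternating-chain normal form from a TransGen derivation. -/
private lemma extract
    (M : Set (V × V)) (T X : Set V) (p q : V) (hp : p ∈ X) (hq : q ∈ X)
    (hXT : ∀ x ∈ X, ∀ t ∈ T, x + t ∈ X)
    (hrefl : ∀ x ∈ X, (x, x) ∈ M)
    (htr : ∀ x y z : V, (x, y) ∈ M → (y, z) ∈ M → (x, z) ∈ M)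
    {u v : V}
    (h : Relation.TransGen (fun a b => (a, b) ∈ M ∨ ∃ t ∈ T, a = p + t ∧ b = q + t) u v) :
    (u, v) ∈ M ∨ ∃ n, 0 < n ∧ ∃ t : ℕ → V, (∀ i < n, t i ∈ T) ∧
      (u, p + t 0) ∈ M ∧ (∀ i, i + 1 < n → (q + t i, p + t (i + 1)) ∈ M) ∧
      (q + t (n - 1), v) ∈ M := by
  induction h with
  | single e =>
    rcases e with hM | ⟨w, hw, rfl, rfl⟩
    · exact Or.inl hM
    · exact Or.inr ⟨1, one_pos, fun _ => w, fun _ _ => hw, hrefl _ (hXT p hp w hw),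
        fun i hi => absurd hi (by omega), hrefl _ (hXT q hq w hw)⟩
  | tail h1 e ih =>
    rcases e with hM | ⟨w, hw, rfl, rfl⟩
    · rcases ih with hM' | ⟨n, hn, t, htT, hfirst, hmid, hlast⟩
      · exact Or.inl (htr _ _ _ hM' hM)
      · exact Or.inr ⟨n, hn, t, htT, hfirst, hmid, htr _ _ _ hlast hM⟩
    · rcases ih with hM' | ⟨n, hn, t, htT, hfirst, hmid, hlast⟩
      · exact Or.inr ⟨1, one_pos, fun _ => w, fun _ _ => hw, hM',
          fun i hi => absurd hi (by omega), hrefl _ (hXT q hq w hw)⟩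
      · refine Or.inr ⟨n + 1, by omega, fun i => if i < n then t i else w, ?_, ?_, ?_, ?_⟩
        · intro i _
          by_cases h : i < n
          · simp only [if_pos h]; exact htT i h
          · simp only [if_neg h]; exact hw
        · simp only [if_pos hn]; exact hfirst
        · intro i hi
          have hin : i < n := by omega
          by_cases h2 : i + 1 < n
          · simp only [if_pos hin, if_pos h2]; exact hmid i h2
          · have hieq : i = n - 1 := by omega
            simp only [if_pos hin, if_neg h2]
            rw [hieq]; exact hlast
        · simp only [Nat.add_sub_cancel, if_neg (lt_irrefl n)]
          exact hrefl _ (hXT q hq w hw)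

/-- The splicing argument: two violation chains (one for each direction of the added pair)
combine into a pure M-path from B + s 0 to A + s 0. -/
private lemma splice
    (M : Set (V × V)) (T : Set V) (x0 y0 A B Cc D : V)
    (htr : ∀ x y z : V, (x, y) ∈ M → (y, z) ∈ M → (x, z) ∈ M)
    (hadd : ∀ t ∈ T, ∀ x y : V, (x, y) ∈ M → (x + t, y + t) ∈ M)
    (n m : ℕ) (hn : 0 < n) (hm : 0 < m) (t s : ℕ → V)
    (htT : ∀ i < n, t i ∈ T) (hsT : ∀ j < m, s j ∈ T)
    (hf1 : (B, x0 + t 0) ∈ M)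
    (hm1 : ∀ i, i + 1 < n → (y0 + t i, x0 + t (i + 1)) ∈ M)
    (hl1 : (y0 + t (n - 1), A) ∈ M)
    (hAB : (A, B) ∈ M)
    (hf2 : (D, y0 + s 0) ∈ M)
    (hm2 : ∀ j, j + 1 < m → (x0 + s j, y0 + s (j + 1)) ∈ M)
    (hl2 : (x0 + s (m - 1), Cc) ∈ M)
    (hCD : (Cc, D) ∈ M) :
    (B + s 0, A + s 0) ∈ M := by
  have conn : ∀ j < m, ∀ w ∈ T, (x0 + s j + w, y0 + s ((j + 1) % m) + w) ∈ M := by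
    intro j hj w hw
    rcases lt_or_ge (j + 1) m with h | h
    · rw [Nat.mod_eq_of_lt h]; exact hadd w hw _ _ (hm2 j h)
    · have hj1 : (j + 1) % m = 0 := by
        have : j + 1 = m := by omega
        rw [this, Nat.mod_self]
      have hj' : j = m - 1 := by omega
      rw [hj1, hj']
      exact htr _ _ _ (htr _ _ _ (hadd w hw _ _ hl2) (hadd w hw _ _ hCD)) (hadd w hw _ _ hf2)
  have astep : ∀ i < n, ∀ w ∈ T, (y0 + t i + w, x0 + t ((i + 1) % n) + w) ∈ M := by
    intro i hi w hw
    rcases lt_or_ge (i + 1) n with h | h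
    · rw [Nat.mod_eq_of_lt h]; exact hadd w hw _ _ (hm1 i h)
    · have hi1 : (i + 1) % n = 0 := by
        have : i + 1 = n := by omega
        rw [this, Nat.mod_self]
      have hi' : i = n - 1 := by omega
      rw [hi1, hi']
      exact htr _ _ _ (htr _ _ _ (hadd w hw _ _ hl1) (hadd w hw _ _ hAB)) (hadd w hw _ _ hf1)
  have modsucc : ∀ κ k : ℕ, (κ + 1) % k = (κ % k + 1) % k := by
    intro κ k
    conv_lhs => rw [Nat.add_mod]
    conv_rhs => rw [Nat.add_mod]
    rw [Nat.mod_mod_of_dvd κ dvd_rfl]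
  have key : ∀ κ, κ < m * n → (B + s 0, x0 + t (κ % n) + s (κ % m)) ∈ M := by
    intro κ
    induction κ with
    | zero =>
      intro _
      have := hadd (s 0) (hsT 0 hm) _ _ hf1
      simpa [Nat.zero_mod] using this
    | succ κ ih =>
      intro hκ
      have h1 := ih (by omega)
      have hc := conn (κ % m) (Nat.mod_lt κ hm) (t (κ % n)) (htT _ (Nat.mod_lt κ hn))
      have ha := astep (κ % n) (Nat.mod_lt κ hn) (s ((κ % m + 1) % m))
        (hsT _ (Nat.mod_lt _ hm))
      rw [show x0 + s (κ % m) + t (κ % n) = x0 + t (κ % n) + s (κ % m) from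
        add_right_comm _ _ _] at hc
      rw [show y0 + s ((κ % m + 1) % m) + t (κ % n) = y0 + t (κ % n) + s ((κ % m + 1) % m) from
        add_right_comm _ _ _] at hc
      have hres := htr _ _ _ (htr _ _ _ h1 hc) ha
      rw [modsucc κ n, modsucc κ m]
      exact hres
  have hmn : 0 < m * n := Nat.mul_pos hm hn
  have hlastn : (m * n - 1) % n = n - 1 := by
    obtain ⟨n', rfl⟩ : ∃ n', n = n' + 1 := ⟨n - 1, by omega⟩
    obtain ⟨m', rfl⟩ : ∃ m', m = m' + 1 := ⟨m - 1, by omega⟩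
    have h : (m' + 1) * (n' + 1) - 1 = n' + m' * (n' + 1) := by
      have h2 : (m' + 1) * (n' + 1) = (n' + m' * (n' + 1)) + 1 := by ring
      rw [h2, Nat.succ_sub_one]
    rw [h, Nat.add_mul_mod_self_right, Nat.mod_eq_of_lt (by omega)]
    omega
  have hlastm : (m * n - 1) % m = m - 1 := by
    obtain ⟨n', rfl⟩ : ∃ n', n = n' + 1 := ⟨n - 1, by omega⟩
    obtain ⟨m', rfl⟩ : ∃ m', m = m' + 1 := ⟨m - 1, by omega⟩
    have h : (m' + 1) * (n' + 1) - 1 = m' + n' * (m' + 1) := by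
      have h2 : (m' + 1) * (n' + 1) = (m' + n' * (m' + 1)) + 1 := by ring
      rw [h2, Nat.succ_sub_one]
    rw [h, Nat.add_mul_mod_self_right, Nat.mod_eq_of_lt (by omega)]
    omega
  have hk := key (m * n - 1) (by omega)
  rw [hlastn, hlastm] at hk
  have hc := conn (m - 1) (by omega) (t (n - 1)) (htT _ (by omega))
  have hmm : (m - 1 + 1) % m = 0 := by
    have : m - 1 + 1 = m := by omega
    rw [this, Nat.mod_self]
  rw [hmm] at hc
  rw [show x0 + s (m - 1) + t (n - 1) = x0 + t (n - 1) + s (m - 1) from add_right_comm _ _ _,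
    show y0 + s 0 + t (n - 1) = y0 + t (n - 1) + s 0 from add_right_comm _ _ _] at hc
  have hfin := hadd (s 0) (hsT 0 hm) _ _ hl1
  exact htr _ _ _ (htr _ _ _ hk hc) hfin

end StmtFourAux

/-- Every C-additive preorder on X ⊆ V (X closed under addition by the
cone C) extends to a complete, transitive, C-additive relation on X. -/
theorem stmt_4 {V : Type*} [AddCommGroup V] [Module ℝ V] (C X : Set V)
    (hzero : (0 : V) ∈ C) (hconeC : ∀ c ∈ C, ∀ l : ℝ, 0 < l → l • c ∈ C)
    (hXC : ∀ x ∈ X, ∀ c ∈ C, x + c ∈ X)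
    (r : V → V → Prop)
    (hrefl : ∀ x ∈ X, r x x)
    (htrans : ∀ x ∈ X, ∀ y ∈ X, ∀ z ∈ X, r x y → r y z → r x z)
    (haddw : ∀ c ∈ C, ∀ x ∈ X, ∀ y ∈ X, r x y → r (x + c) (y + c))
    (hadds : ∀ c ∈ C, ∀ x ∈ X, ∀ y ∈ X, r x y → ¬ r y x →
      r (x + c) (y + c) ∧ ¬ r (y + c) (x + c)) :
    ∃ R : V → V → Prop,
      (∀ x ∈ X, ∀ y ∈ X, R x y ∨ R y x) ∧
      (∀ x ∈ X, ∀ y ∈ X, ∀ z ∈ X, R x y → R y z → R x z) ∧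
      (∀ x ∈ X, ∀ y ∈ X, r x y → R x y) ∧
      (∀ x ∈ X, ∀ y ∈ X, r x y → ¬ r y x → R x y ∧ ¬ R y x) ∧
      (∀ c ∈ C, ∀ x ∈ X, ∀ y ∈ X, (R x y → R (x + c) (y + c)) ∧
        (R x y ∧ ¬ R y x → R (x + c) (y + c) ∧ ¬ R (y + c) (x + c))) := by
  classical
  -- T : the set of "good translations"
  set T : Set V := {t : V | (∀ x ∈ X, x + t ∈ X) ∧
      (∀ x ∈ X, ∀ y ∈ X, r x y → r (x + t) (y + t)) ∧
      (∀ x ∈ X, ∀ y ∈ X, r x y → ¬ r y x → r (x + t) (y + t) ∧ ¬ r (y + t) (x + t))}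
    with hTdef
  have hT0 : (0 : V) ∈ T := by
    refine ⟨fun x hx => by simpa using hx, fun x hx y hy h => by simpa using h, ?_⟩
    intro x hx y hy h hn
    simpa using And.intro h hn
  have hTadd : ∀ a ∈ T, ∀ b ∈ T, a + b ∈ T := by
    intro a ha b hb
    obtain ⟨ha1, ha2, ha3⟩ := ha
    obtain ⟨hb1, hb2, hb3⟩ := hb
    refine ⟨?_, ?_, ?_⟩
    · intro x hx
      rw [← add_assoc]; exact hb1 _ (ha1 x hx)
    · intro x hx y hy h
      rw [← add_assoc, ← add_assoc]
      exact hb2 _ (ha1 x hx) _ (ha1 y hy) (ha2 x hx y hy h)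
    · intro x hx y hy h hn
      rw [← add_assoc, ← add_assoc]
      obtain ⟨h1, h2⟩ := ha3 x hx y hy h hn
      exact hb3 _ (ha1 x hx) _ (ha1 y hy) h1 h2
  have hCT : ∀ c ∈ C, c ∈ T := by
    intro c hc
    exact ⟨fun x hx => hXC x hx c hc, fun x hx y hy h => haddw c hc x hx y hy h,
      fun x hx y hy h hn => hadds c hc x hx y hy h hn⟩
  have hXT : ∀ x ∈ X, ∀ t ∈ T, x + t ∈ X := fun x hx t ht => ht.1 x hx
  -- Zorn's lemma over good relations
  set Q0 : Set (V × V) := {pr | pr.1 ∈ X ∧ pr.2 ∈ X ∧ r pr.1 pr.2} with hQ0def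
  have hQ0 : GoodRel X T r Q0 := by
    refine ⟨fun p hp => ⟨hp.1, hp.2.1⟩, fun x hx y hy h => ⟨hx, hy, h⟩, ?_, ?_, ?_⟩
    · intro x hx y hy h hn hmem
      exact hn hmem.2.2
    · intro x y z h1 h2
      exact ⟨h1.1, h2.2.1, htrans x h1.1 y h1.2.1 z h2.2.1 h1.2.2 h2.2.2⟩
    · intro t ht x y h
      exact ⟨ht.1 x h.1, ht.1 y h.2.1, ht.2.1 x h.1 y h.2.1 h.2.2⟩
  obtain ⟨M, hQ0M, hmax⟩ := zorn_subset_nonempty {Q | GoodRel X T r Q}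
    (by
      intro c hc hchain hne
      refine ⟨⋃₀ c, ?_, fun s hs => Set.subset_sUnion_of_mem hs⟩
      obtain ⟨Q1, hQ1⟩ := hne
      refine ⟨?_, ?_, ?_, ?_, ?_⟩
      · rintro p ⟨Q, hQ, hpQ⟩
        exact (hc hQ).1 p hpQ
      · intro x hx y hy h
        exact ⟨Q1, hQ1, (hc hQ1).2.1 x hx y hy h⟩
      · rintro x hx y hy h hn ⟨Q, hQ, hmem⟩
        exact (hc hQ).2.2.1 x hx y hy h hn hmem
      · rintro x y z ⟨Q1', hQ1', h1⟩ ⟨Q2', hQ2', h2⟩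
        rcases hchain.total hQ1' hQ2' with hsub | hsub
        · exact ⟨Q2', hQ2', (hc hQ2').2.2.2.1 x y z (hsub h1) h2⟩
        · exact ⟨Q1', hQ1', (hc hQ1').2.2.2.1 x y z h1 (hsub h2)⟩
      · rintro t ht x y ⟨Q, hQ, hmem⟩
        exact ⟨Q, hQ, (hc hQ).2.2.2.2 t ht x y hmem⟩)
    Q0 hQ0
  have hGM : GoodRel X T r M := hmax.1
  have hreflM : ∀ x ∈ X, (x, x) ∈ M := fun x hx => hGM.2.1 x hx x hx (hrefl x hx)
  have htrM : ∀ x y z : V, (x, y) ∈ M → (y, z) ∈ M → (x, z) ∈ M := hGM.2.2.2.1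
  have haddM : ∀ t ∈ T, ∀ x y : V, (x, y) ∈ M → (x + t, y + t) ∈ M := hGM.2.2.2.2
  -- Completeness of M on X
  have hcomp : ∀ x ∈ X, ∀ y ∈ X, (x, y) ∈ M ∨ (y, x) ∈ M := by
    intro x0 hx0 y0 hy0
    by_contra hcon
    push_neg at hcon
    obtain ⟨h1, h2⟩ := hcon
    obtain ⟨a, b, ha, hb, hab, hba, hch1⟩ :=
      addPair_viol X T r M hT0 hTadd hXT hmax x0 y0 hx0 hy0 h1
    obtain ⟨cc, d, hcX, hdX, hcd, hdc, hch2⟩ :=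
      addPair_viol X T r M hT0 hTadd hXT hmax y0 x0 hy0 hx0 h2
    rcases extract M T X x0 y0 hx0 hy0 hXT hreflM htrM hch1 with
      hba' | ⟨n, hn, t, htT, hf1, hm1, hl1⟩
    · exact hGM.2.2.1 a ha b hb hab hba hba'
    rcases extract M T X y0 x0 hy0 hx0 hXT hreflM htrM hch2 with
      hdc' | ⟨m, hm, s, hsT, hf2, hm2, hl2⟩
    · exact hGM.2.2.1 cc hcX d hdX hcd hdc hdc'
    have hAB : (a, b) ∈ M := hGM.2.1 a ha b hb hab
    have hCD : (cc, d) ∈ M := hGM.2.1 cc hcX d hdX hcd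
    have hBA := splice M T x0 y0 a b cc d htrM haddM n m hn hm t s htT hsT
      hf1 hm1 hl1 hAB hf2 hm2 hl2 hCD
    have hs0 : s 0 ∈ T := hsT 0 hm
    have hstrict := hs0.2.2 a ha b hb hab hba
    exact hGM.2.2.1 (a + s 0) (hXT a ha _ hs0) (b + s 0) (hXT b hb _ hs0)
      hstrict.1 hstrict.2 hBA
  -- Strict additivity of M
  have hstrictadd : ∀ c0 ∈ C, ∀ x ∈ X, ∀ y ∈ X,
      (x, y) ∈ M → (y, x) ∉ M → (y + c0, x + c0) ∉ M := by
    intro c0 hc0 x hx y hy _ hyx hmem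
    obtain ⟨a, b, ha, hb, hab, hba, hch⟩ :=
      addPair_viol X T r M hT0 hTadd hXT hmax y x hy hx hyx
    rcases extract M T X y x hy hx hXT hreflM htrM hch with
      h | ⟨n, hn, t, htT, hf, hmid, hl⟩
    · exact hGM.2.2.1 a ha b hb hab hba h
    have hc0T : c0 ∈ T := hCT c0 hc0
    have hsub : ∀ i < n, (y + t i + c0, x + t i + c0) ∈ M := by
      intro i hi
      have := haddM (t i) (htT i hi) _ _ hmem
      rw [show y + c0 + t i = y + t i + c0 from add_right_comm _ _ _,
        show x + c0 + t i = x + t i + c0 from add_right_comm _ _ _] at this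
      exact this
    have hkey : ∀ k, k < n → (b + c0, y + t k + c0) ∈ M := by
      intro k
      induction k with
      | zero => intro _; exact haddM c0 hc0T _ _ hf
      | succ k ih =>
        intro hk
        have hkn : k < n := by omega
        have h1 := ih hkn
        have h2 := hsub k hkn
        have h3 := haddM c0 hc0T _ _ (hmid k hk)
        exact htrM _ _ _ (htrM _ _ _ h1 h2) h3
    have hfin := htrM _ _ _ (htrM _ _ _ (hkey (n - 1) (by omega)) (hsub (n - 1) (by omega)))
      (haddM c0 hc0T _ _ hl)
    have hstr := hadds c0 hc0 a ha b hb hab hba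
    exact hGM.2.2.1 _ (hXC a ha c0 hc0) _ (hXC b hb c0 hc0) hstr.1 hstr.2 hfin
  -- Assemble the final relation
  refine ⟨fun x y => (x, y) ∈ M, ?_, ?_, ?_, ?_, ?_⟩
  · exact hcomp
  · intro x _ y _ z _ h1 h2
    exact htrM x y z h1 h2
  · intro x hx y hy h
    exact hGM.2.1 x hx y hy h
  · intro x hx y hy h hn
    exact ⟨hGM.2.1 x hx y hy h, hGM.2.2.1 x hx y hy h hn⟩
  · intro c hc x hx y hy
    refine ⟨fun h => haddM c (hCT c hc) x y h, ?_⟩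
    rintro ⟨h1, h2⟩
    exact ⟨haddM c (hCT c hc) x y h1, hstrictadd c hc x hx y hy h1 h2⟩
end

section
/- Let X be a set, M a commutative monoid of transformations of X, and ≿ an M-invariant preorder on X. If w, z ∈ X are ≿-incomparable, then there exists an acyclic, M-invariant extension of ≿ that renders w and z comparable. -/
namespace Stmt5Aux

variable {X : Type*}

/-- One "jump" through the added pair `w ≿ z` (saturated by `M`):
`a ≾ κ w` and `κ z ≾ b` for some `κ ∈ M`. -/
def jumpRel (M : Set (X → X)) (r : X → X → Prop) (w z : X) (a b : X) : Prop :=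
  ∃ κ, κ ∈ M ∧ r a (κ w) ∧ r (κ z) b

/-- A "link" between two transformations: `κ z ≾ κ' w`. -/
def linkRel (M : Set (X → X)) (r : X → X → Prop) (w z : X) (κ κ' : X → X) : Prop :=
  κ ∈ M ∧ κ' ∈ M ∧ r (κ z) (κ' w)

/-- The candidate extension. -/
def bigRel (M : Set (X → X)) (r : X → X → Prop) (w z : X) (x y : X) : Prop :=
  ∃ ω, ω ∈ M ∧ (r (ω x) (ω y) ∨ Relation.TransGen (jumpRel M r w z) (ω x) (ω y))

/-- The obstruction to adding `w ≿ z`: a cycle of links closed by a strict edge. -/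
def badPair (M : Set (X → X)) (r : X → X → Prop) (w z : X) : Prop :=
  ∃ κ₁ κ₂, κ₁ ∈ M ∧ κ₂ ∈ M ∧ Relation.ReflTransGen (linkRel M r w z) κ₁ κ₂ ∧
    r (κ₂ z) (κ₁ w) ∧ ¬ r (κ₁ w) (κ₂ z)

section

variable {M : Set (X → X)} {r : X → X → Prop} {w z : X}

lemma jump_absorbL (htrans : ∀ x y z, r x y → r y z → r x z)
    {a a' b : X} (h : r a a') (hj : jumpRel M r w z a' b) : jumpRel M r w z a b := by
  obtain ⟨κ, hκ, h1, h2⟩ := hj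
  exact ⟨κ, hκ, htrans _ _ _ h h1, h2⟩

lemma jump_absorbR (htrans : ∀ x y z, r x y → r y z → r x z)
    {a b b' : X} (hj : jumpRel M r w z a b) (h : r b b') : jumpRel M r w z a b' := by
  obtain ⟨κ, hκ, h1, h2⟩ := hj
  exact ⟨κ, hκ, h1, htrans _ _ _ h2 h⟩

lemma jump_map (hcomp : ∀ ω ∈ M, ∀ ω' ∈ M, ω ∘ ω' ∈ M)
    (hinvw : ∀ ω ∈ M, ∀ x y, r x y → r (ω x) (ω y))
    {τ : X → X} (hτ : τ ∈ M) {a b : X} (hj : jumpRel M r w z a b) :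
    jumpRel M r w z (τ a) (τ b) := by
  obtain ⟨κ, hκ, h1, h2⟩ := hj
  exact ⟨τ ∘ κ, hcomp τ hτ κ hκ, hinvw τ hτ _ _ h1, hinvw τ hτ _ _ h2⟩

lemma tg_map (hcomp : ∀ ω ∈ M, ∀ ω' ∈ M, ω ∘ ω' ∈ M)
    (hinvw : ∀ ω ∈ M, ∀ x y, r x y → r (ω x) (ω y))
    {τ : X → X} (hτ : τ ∈ M) {a b : X}
    (h : Relation.TransGen (jumpRel M r w z) a b) :
    Relation.TransGen (jumpRel M r w z) (τ a) (τ b) := by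
  induction h with
  | single h => exact Relation.TransGen.single (jump_map hcomp hinvw hτ h)
  | tail _ h ih => exact Relation.TransGen.tail ih (jump_map hcomp hinvw hτ h)

lemma tg_absorbL (htrans : ∀ x y z, r x y → r y z → r x z)
    {a a' b : X} (h : r a a') (htg : Relation.TransGen (jumpRel M r w z) a' b) :
    Relation.TransGen (jumpRel M r w z) a b := by
  obtain ⟨c, hc, hcb⟩ := (Relation.TransGen.head'_iff).1 htg
  exact Relation.TransGen.head' (jump_absorbL htrans h hc) hcb

lemma tg_absorbR (htrans : ∀ x y z, r x y → r y z → r x z)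
    {a b b' : X} (htg : Relation.TransGen (jumpRel M r w z) a b) (h : r b b') :
    Relation.TransGen (jumpRel M r w z) a b' := by
  obtain ⟨c, hac, hcb⟩ := (Relation.TransGen.tail'_iff).1 htg
  exact Relation.TransGen.tail' hac (jump_absorbR htrans hcb h)

lemma big_extends {x y : X} (hid : id ∈ M) (h : r x y) : bigRel M r w z x y :=
  ⟨id, hid, Or.inl h⟩

lemma big_refl (hid : id ∈ M) (hrefl : ∀ x, r x x) (x : X) : bigRel M r w z x x :=
  ⟨id, hid, Or.inl (hrefl x)⟩

lemma big_trans (hcomp : ∀ ω ∈ M, ∀ ω' ∈ M, ω ∘ ω' ∈ M)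
    (hcomm : ∀ ω ∈ M, ∀ ω' ∈ M, ω ∘ ω' = ω' ∘ ω)
    (htrans : ∀ x y z, r x y → r y z → r x z)
    (hinvw : ∀ ω ∈ M, ∀ x y, r x y → r (ω x) (ω y))
    {x y u : X} (h1 : bigRel M r w z x y) (h2 : bigRel M r w z y u) :
    bigRel M r w z x u := by
  obtain ⟨ω₁, hω₁, d1⟩ := h1
  obtain ⟨ω₂, hω₂, d2⟩ := h2
  refine ⟨ω₂ ∘ ω₁, hcomp ω₂ hω₂ ω₁ hω₁, ?_⟩
  have e : ω₂ ∘ ω₁ = ω₁ ∘ ω₂ := hcomm ω₂ hω₂ ω₁ hω₁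
  have ey : ω₂ (ω₁ y) = ω₁ (ω₂ y) := congrFun e y
  have eu : ω₂ (ω₁ u) = ω₁ (ω₂ u) := congrFun e u
  -- push d1 by ω₂, d2 by ω₁
  have d1' : r (ω₂ (ω₁ x)) (ω₂ (ω₁ y)) ∨
      Relation.TransGen (jumpRel M r w z) (ω₂ (ω₁ x)) (ω₂ (ω₁ y)) := by
    rcases d1 with h | h
    · exact Or.inl (hinvw ω₂ hω₂ _ _ h)
    · exact Or.inr (tg_map hcomp hinvw hω₂ h)
  have d2' : r (ω₁ (ω₂ y)) (ω₁ (ω₂ u)) ∨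
      Relation.TransGen (jumpRel M r w z) (ω₁ (ω₂ y)) (ω₁ (ω₂ u)) := by
    rcases d2 with h | h
    · exact Or.inl (hinvw ω₁ hω₁ _ _ h)
    · exact Or.inr (tg_map hcomp hinvw hω₁ h)
  rw [← ey, ← eu] at d2'
  show r (ω₂ (ω₁ x)) (ω₂ (ω₁ u)) ∨
      Relation.TransGen (jumpRel M r w z) (ω₂ (ω₁ x)) (ω₂ (ω₁ u))
  rcases d1' with h1' | h1' <;> rcases d2' with h2' | h2'
  · exact Or.inl (htrans _ _ _ h1' h2')
  · exact Or.inr (tg_absorbL htrans h1' h2')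
  · exact Or.inr (tg_absorbR htrans h1' h2')
  · exact Or.inr (h1'.trans h2')

lemma big_inv_weak (hcomp : ∀ ω ∈ M, ∀ ω' ∈ M, ω ∘ ω' ∈ M)
    (hcomm : ∀ ω ∈ M, ∀ ω' ∈ M, ω ∘ ω' = ω' ∘ ω)
    (hinvw : ∀ ω ∈ M, ∀ x y, r x y → r (ω x) (ω y))
    {τ : X → X} (hτ : τ ∈ M) {x y : X} (h : bigRel M r w z x y) :
    bigRel M r w z (τ x) (τ y) := by
  obtain ⟨ω, hω, d⟩ := h
  refine ⟨ω, hω, ?_⟩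
  have ex : τ (ω x) = ω (τ x) := congrFun (hcomm τ hτ ω hω) x
  have ey : τ (ω y) = ω (τ y) := congrFun (hcomm τ hτ ω hω) y
  rcases d with h | h
  · exact Or.inl (ex ▸ ey ▸ hinvw τ hτ _ _ h)
  · exact Or.inr (ex ▸ ey ▸ tg_map hcomp hinvw hτ h)

lemma big_pull (hcomp : ∀ ω ∈ M, ∀ ω' ∈ M, ω ∘ ω' ∈ M)
    {τ : X → X} (hτ : τ ∈ M) {x y : X} (h : bigRel M r w z (τ x) (τ y)) :
    bigRel M r w z x y := by
  obtain ⟨ω, hω, d⟩ := h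
  exact ⟨ω ∘ τ, hcomp ω hω τ hτ, d⟩

lemma tg_decomp (htrans : ∀ x y z, r x y → r y z → r x z)
    {a b : X} (h : Relation.TransGen (jumpRel M r w z) a b) :
    ∃ κ₁ κ₂, κ₁ ∈ M ∧ κ₂ ∈ M ∧ Relation.ReflTransGen (linkRel M r w z) κ₁ κ₂ ∧
      r a (κ₁ w) ∧ r (κ₂ z) b := by
  induction h with
  | single h =>
    obtain ⟨κ, hκ, h1, h2⟩ := h
    exact ⟨κ, κ, hκ, hκ, Relation.ReflTransGen.refl, h1, h2⟩
  | tail _ h ih =>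
    obtain ⟨κ₁, κ₂, hκ₁, hκ₂, hch, ha, hb⟩ := ih
    obtain ⟨κ₃, hκ₃, h1, h2⟩ := h
    exact ⟨κ₁, κ₃, hκ₁, hκ₃, hch.tail ⟨hκ₂, hκ₃, htrans _ _ _ hb h1⟩, ha, h2⟩

lemma big_strict (htrans : ∀ x y z, r x y → r y z → r x z)
    (hinvs : ∀ ω ∈ M, ∀ x y, r x y → ¬ r y x → r (ω x) (ω y) ∧ ¬ r (ω y) (ω x))
    (hnb : ¬ badPair M r w z) {x y : X} (hxy : r x y) (hnyx : ¬ r y x) :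
    ¬ bigRel M r w z y x := by
  rintro ⟨ω, hω, d⟩
  obtain ⟨hs1, hs2⟩ := hinvs ω hω x y hxy hnyx
  rcases d with h | h
  · exact hs2 h
  · obtain ⟨κ₁, κ₂, hκ₁, hκ₂, hch, ha, hb⟩ := tg_decomp htrans h
    refine hnb ⟨κ₁, κ₂, hκ₁, hκ₂, hch, ?_, ?_⟩
    · exact htrans _ _ _ hb (htrans _ _ _ hs1 ha)
    · intro hc
      exact hs2 (htrans _ _ _ ha (htrans _ _ _ hc hb))

lemma big_implies_of_rtg (hid : id ∈ M)
    (hcomp : ∀ ω ∈ M, ∀ ω' ∈ M, ω ∘ ω' ∈ M)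
    (hcomm : ∀ ω ∈ M, ∀ ω' ∈ M, ω ∘ ω' = ω' ∘ ω)
    (hrefl : ∀ x, r x x) (htrans : ∀ x y z, r x y → r y z → r x z)
    (hinvw : ∀ ω ∈ M, ∀ x y, r x y → r (ω x) (ω y))
    {a b : X} (h : Relation.ReflTransGen (bigRel M r w z) a b) :
    bigRel M r w z a b := by
  induction h with
  | refl => exact big_refl hid hrefl a
  | tail _ h ih => exact big_trans hcomp hcomm htrans hinvw ih h

/-- Extract a finite indexed chain from a `ReflTransGen`. -/
lemma chain_to_fun {α : Type*} {L : α → α → Prop} {x y : α}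
    (h : Relation.ReflTransGen L x y) :
    ∃ (n : ℕ) (c : ℕ → α), c 0 = x ∧ c n = y ∧ ∀ k < n, L (c k) (c (k + 1)) := by
  induction h with
  | refl => exact ⟨0, fun _ => x, rfl, rfl, by intro k hk; omega⟩
  | @tail b t _ hstep ih =>
    obtain ⟨n, c, h0, hn, he⟩ := ih
    refine ⟨n + 1, fun k => if k ≤ n then c k else t, by simp [h0], by simp, ?_⟩
    intro k hk
    by_cases hk2 : k < n
    · simpa [Nat.le_of_lt hk2, Nat.succ_le_of_lt hk2] using he k hk2
    · have hkn : k = n := by omega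
      subst hkn
      simpa [hn] using hstep

lemma succ_mod_of_eq {k n : ℕ} (h : k % (n + 1) = n) : (k + 1) % (n + 1) = 0 := by
  have hd := Nat.div_add_mod k (n + 1)
  have h2 : k + 1 = (n + 1) * (k / (n + 1) + 1) := by
    rw [Nat.mul_succ]; omega
  rw [h2, Nat.mul_mod_right]

lemma succ_mod_of_lt {k n : ℕ} (h : k % (n + 1) < n) :
    (k + 1) % (n + 1) = k % (n + 1) + 1 := by
  have hd := Nat.div_add_mod k (n + 1)
  have h2 : k + 1 = (k % (n + 1) + 1) + (n + 1) * (k / (n + 1)) := by omega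
  rw [h2, Nat.add_mul_mod_self_left, Nat.mod_eq_of_lt (by omega)]

/-- The two obstructions cannot hold simultaneously. -/
lemma badbad (hcomp : ∀ ω ∈ M, ∀ ω' ∈ M, ω ∘ ω' ∈ M)
    (hcomm : ∀ ω ∈ M, ∀ ω' ∈ M, ω ∘ ω' = ω' ∘ ω)
    (hrefl : ∀ x, r x x) (htrans : ∀ x y z, r x y → r y z → r x z)
    (hinvw : ∀ ω ∈ M, ∀ x y, r x y → r (ω x) (ω y))
    (hinvs : ∀ ω ∈ M, ∀ x y, r x y → ¬ r y x → r (ω x) (ω y) ∧ ¬ r (ω y) (ω x))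
    (h1 : badPair M r w z) (h2 : badPair M r z w) : False := by
  obtain ⟨κ₁, κ₂, hκ₁, hκ₂, hch, hs1, hs2⟩ := h1
  obtain ⟨η₁, η₂, hη₁, hη₂, hch', ht1, -⟩ := h2
  obtain ⟨n, c, hc0, hcn, hce⟩ := chain_to_fun hch
  obtain ⟨q, d, hd0, hdq, hde⟩ := chain_to_fun hch'
  -- memberships along the chains
  have hcM : ∀ k ≤ n, c k ∈ M := by
    intro k hk
    cases k with
    | zero => rw [hc0]; exact hκ₁
    | succ k' => exact (hce k' (by omega)).2.1
  have hdM : ∀ k ≤ q, d k ∈ M := by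
    intro k hk
    cases k with
    | zero => rw [hd0]; exact hη₁
    | succ k' => exact (hde k' (by omega)).2.1
  set N := n + 1 with hN
  set Q := q + 1 with hQ
  have hmodN : ∀ k : ℕ, k % N ≤ n := fun k => by
    have := Nat.mod_lt k (show 0 < N by omega); omega
  have hmodQ : ∀ k : ℕ, k % Q ≤ q := fun k => by
    have := Nat.mod_lt k (show 0 < Q by omega); omega
  -- the cyclic edges
  have hcedge : ∀ k : ℕ, r (c (k % N) z) (c ((k + 1) % N) w) := by
    intro k
    rcases Nat.lt_or_ge (k % N) n with h | h
    · rw [succ_mod_of_lt h]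
      exact (hce (k % N) h).2.2
    · have heq : k % N = n := le_antisymm (hmodN k) h
      rw [heq, succ_mod_of_eq heq, hc0, hcn]
      exact hs1
  have hdedge : ∀ k : ℕ, r (d (k % Q) w) (d ((k + 1) % Q) z) := by
    intro k
    rcases Nat.lt_or_ge (k % Q) q with h | h
    · rw [succ_mod_of_lt h]
      exact (hde (k % Q) h).2.2
    · have heq : k % Q = q := le_antisymm (hmodQ k) h
      rw [heq, succ_mod_of_eq heq, hd0, hdq]
      exact ht1
  -- the combined cyclic chain
  set P : ℕ → X := fun k => d (k % Q) (c (k % N) z) with hP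
  have hmid : ∀ k : ℕ, d (k % Q) (c ((k + 1) % N) w) = c ((k + 1) % N) (d (k % Q) w) :=
    fun k => congrFun (hcomm (d (k % Q)) (hdM _ (hmodQ k)) (c ((k + 1) % N))
      (hcM _ (hmodN (k + 1)))) w
  have he2 : ∀ k : ℕ, r (d (k % Q) (c ((k + 1) % N) w)) (P (k + 1)) := by
    intro k
    have h := hinvw (c ((k + 1) % N)) (hcM _ (hmodN (k + 1))) _ _ (hdedge k)
    rw [hmid k]
    have e : c ((k + 1) % N) (d ((k + 1) % Q) z) = d ((k + 1) % Q) (c ((k + 1) % N) z) :=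
      congrFun (hcomm (c ((k + 1) % N)) (hcM _ (hmodN (k + 1))) (d ((k + 1) % Q))
        (hdM _ (hmodQ (k + 1)))) z
    rw [e] at h
    exact h
  have hstep : ∀ k : ℕ, r (P k) (P (k + 1)) := by
    intro k
    have e1 : r (P k) (d (k % Q) (c ((k + 1) % N) w)) :=
      hinvw (d (k % Q)) (hdM _ (hmodQ k)) _ _ (hcedge k)
    exact htrans _ _ _ e1 (he2 k)
  have hmono : ∀ i j : ℕ, i ≤ j → r (P i) (P j) := by
    intro i j hij
    induction j, hij using Nat.le_induction with
    | base => exact hrefl _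
    | succ j _ ih => exact htrans _ _ _ ih (hstep j)
  -- strictness at k = n
  have hnmod : n % N = n := Nat.mod_eq_of_lt (by omega)
  have hstrict : ¬ r (P (n + 1)) (P n) := by
    intro hcon
    have heq0 : (n + 1) % N = 0 := succ_mod_of_eq hnmod
    have hs : ¬ r (d (n % Q) (c 0 w)) (d (n % Q) (c n z)) := by
      have := hinvs (d (n % Q)) (hdM _ (hmodQ n)) (c n z) (c 0 w)
        (by rw [hc0, hcn]; exact hs1) (by rw [hc0, hcn]; exact hs2)
      exact this.2
    apply hs
    have hmid' : r (d (n % Q) (c ((n + 1) % N) w)) (P n) :=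
      htrans _ _ _ (he2 n) hcon
    rw [heq0] at hmid'
    have : P n = d (n % Q) (c n z) := by rw [hP]; simp only; rw [hnmod]
    rw [this] at hmid'
    exact hmid'
  -- close the cycle
  have hL0 : P (N * Q) = P 0 := by
    rw [hP]
    simp only
    rw [Nat.mul_mod_right, Nat.mul_mod_left, Nat.zero_mod, Nat.zero_mod]
  have hle : n + 1 ≤ N * Q := by
    calc n + 1 = N * 1 := by omega
    _ ≤ N * Q := Nat.mul_le_mul_left N (by omega)
  apply hstrict
  have ha : r (P (n + 1)) (P (N * Q)) := hmono _ _ hle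
  rw [hL0] at ha
  exact htrans _ _ _ ha (hmono 0 n (Nat.zero_le n))

/-- If the obstruction for direction `w ≿ z` fails, `bigRel` works. -/
lemma good (hid : id ∈ M) (hcomp : ∀ ω ∈ M, ∀ ω' ∈ M, ω ∘ ω' ∈ M)
    (hcomm : ∀ ω ∈ M, ∀ ω' ∈ M, ω ∘ ω' = ω' ∘ ω)
    (hrefl : ∀ x, r x x) (htrans : ∀ x y z, r x y → r y z → r x z)
    (hinvw : ∀ ω ∈ M, ∀ x y, r x y → r (ω x) (ω y))
    (hinvs : ∀ ω ∈ M, ∀ x y, r x y → ¬ r y x → r (ω x) (ω y) ∧ ¬ r (ω y) (ω x))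
    (hnb : ¬ badPair M r w z) :
    ∃ R : X → X → Prop,
      (∀ x y, r x y → R x y) ∧
      (∀ x y, r x y → ¬ r y x → R x y ∧ ¬ R y x) ∧
      (∀ ω ∈ M, ∀ x y, (R x y → R (ω x) (ω y)) ∧
        (R x y ∧ ¬ R y x → R (ω x) (ω y) ∧ ¬ R (ω y) (ω x))) ∧
      (¬ ∃ a b, Relation.ReflTransGen R a b ∧ R b a ∧ ¬ R a b) ∧
      R w z := by
  refine ⟨bigRel M r w z, ?_, ?_, ?_, ?_, ?_⟩
  · exact fun x y h => big_extends hid h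
  · exact fun x y h h' => ⟨big_extends hid h, big_strict htrans hinvs hnb h h'⟩
  · intro ω hω x y
    constructor
    · exact fun h => big_inv_weak hcomp hcomm hinvw hω h
    · rintro ⟨h1, h2⟩
      refine ⟨big_inv_weak hcomp hcomm hinvw hω h1, fun hc => h2 ?_⟩
      exact big_pull hcomp hω hc
  · rintro ⟨a, b, hab, hba, hnab⟩
    exact hnab (big_implies_of_rtg hid hcomp hcomm hrefl htrans hinvw hab)
  · exact ⟨id, hid, Or.inr (Relation.TransGen.single ⟨id, hid, hrefl _, hrefl _⟩)⟩

end

end Stmt5Aux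

/-- For a commutative monoid M of transformations and an M-invariant
preorder r, any two r-incomparable elements can be rendered comparable by an acyclic,
M-invariant extension of r. -/
theorem stmt_5 {X : Type*} (M : Set (X → X))
    (hid : id ∈ M) (hcomp : ∀ ω ∈ M, ∀ ω' ∈ M, ω ∘ ω' ∈ M)
    (hcomm : ∀ ω ∈ M, ∀ ω' ∈ M, ω ∘ ω' = ω' ∘ ω)
    (r : X → X → Prop) (hrefl : ∀ x, r x x)
    (htrans : ∀ x y z, r x y → r y z → r x z)
    (hinvw : ∀ ω ∈ M, ∀ x y, r x y → r (ω x) (ω y))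
    (hinvs : ∀ ω ∈ M, ∀ x y, r x y → ¬ r y x → r (ω x) (ω y) ∧ ¬ r (ω y) (ω x))
    (w z : X) (hwz : ¬ r w z ∧ ¬ r z w) :
    ∃ R : X → X → Prop,
      (∀ x y, r x y → R x y) ∧
      (∀ x y, r x y → ¬ r y x → R x y ∧ ¬ R y x) ∧
      (∀ ω ∈ M, ∀ x y, (R x y → R (ω x) (ω y)) ∧
        (R x y ∧ ¬ R y x → R (ω x) (ω y) ∧ ¬ R (ω y) (ω x))) ∧
      (¬ ∃ a b, Relation.ReflTransGen R a b ∧ R b a ∧ ¬ R a b) ∧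
      (R w z ∨ R z w) := by
  by_cases hb : Stmt5Aux.badPair M r w z
  · have hnb : ¬ Stmt5Aux.badPair M r z w :=
      fun hb' => Stmt5Aux.badbad hcomp hcomm hrefl htrans hinvw hinvs hb' hb
    obtain ⟨R, h1, h2, h3, h4, h5⟩ :=
      Stmt5Aux.good (w := z) (z := w) hid hcomp hcomm hrefl htrans hinvw hinvs hnb
    exact ⟨R, h1, h2, h3, h4, Or.inr h5⟩
  · obtain ⟨R, h1, h2, h3, h4, h5⟩ :=
      Stmt5Aux.good hid hcomp hcomm hrefl htrans hinvw hinvs hb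
    exact ⟨R, h1, h2, h3, h4, Or.inl h5⟩
end

section
/- Consider X = Z^ℕ with Z containing at least four distinct elements a, b, c, d, and fixed streams x, y ∈ X. Suppose ≻ᴿ consists exactly of the four strict comparisons: (a,x₁,x₂,...) ≻ᴿ (b,y₁,y₂,...), (b,x₁,...) ≻ᴿ (a,y₁,...), (c,y₁,...) ≻ᴿ (d,x₁,...), and (d,y₁,...) ≻ᴿ (c,x₁,...). Then there exists no complete, transitive relation ≽ extending ≻ᴿ (i.e., with ≻ᴿ contained in the strict part of ≽) that is stationary, i.e., satisfying (s₁,s₂,...) ≽ (t₁,t₂,...) iff (z,s₁,s₂,...) ≽ (z,t₁,t₂,...) for all z ∈ Z. -/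
/-- Prepend a prize to an infinite consumption stream. -/
def consStream {Z : Type*} (z : Z) (s : ℕ → Z) : ℕ → Z
  | 0 => z
  | n + 1 => s n

/-- The four strict observations admit no complete, transitive,
stationary rationalization. -/
theorem stmt_6 {Z : Type*} (a b c d : Z)
    (hab : a ≠ b) (hac : a ≠ c) (had : a ≠ d) (hbc : b ≠ c) (hbd : b ≠ d) (hcd : c ≠ d)
    (x y : ℕ → Z) :
    ¬ ∃ R : (ℕ → Z) → (ℕ → Z) → Prop,
      (∀ s t, R s t ∨ R t s) ∧
      (∀ s t u, R s t → R t u → R s u) ∧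
      (∀ (z : Z) (s t : ℕ → Z), R s t ↔ R (consStream z s) (consStream z t)) ∧
      (R (consStream a x) (consStream b y) ∧ ¬ R (consStream b y) (consStream a x)) ∧
      (R (consStream b x) (consStream a y) ∧ ¬ R (consStream a y) (consStream b x)) ∧
      (R (consStream c y) (consStream d x) ∧ ¬ R (consStream d x) (consStream c y)) ∧
      (R (consStream d y) (consStream c x) ∧ ¬ R (consStream c x) (consStream d y)) := by
  rintro ⟨R, total, trans, stat, ⟨h1, h1'⟩, ⟨h2, h2'⟩, ⟨h3, h3'⟩, ⟨h4, h4'⟩⟩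
  rcases total x y with hxy | hyx
  · -- R (c,x) (c,y), then R (c,y) (d,x), then R (d,x) (d,y): contradiction with h4'
    exact h4' (trans _ _ _ ((stat c x y).mp hxy) (trans _ _ _ h3 ((stat d x y).mp hxy)))
  · -- R (b,y) (b,x), R (b,x) (a,y), R (a,y) (a,x): contradiction with h1'
    exact h1' (trans _ _ _ ((stat b y x).mp hyx) (trans _ _ _ h2 ((stat a y x).mp hyx)))
end

section
/- Let S = {1,2,3,4,5} and consider vectors in ℤ^S. Suppose ≻* is a relation on ℤ^S satisfying translation-invariance (f ≻* g iff f + h ≻* g + h for all h ∈ ℤ^S) whose strict comparisons include: 𝟙_{1,4} ≺* 𝟙_{2,3,5}, 𝟙_{2,3} ≺* 𝟙_{1,5}, 𝟙_{2,5} ≺* 𝟙_{3,4}, and 𝟙_{3,5} ≺* 𝟙_{2}. Then ≻* contains a cycle: there is a finite chain f_0 ≺* f_1 ≺* ... ≺* f_N = f_0 with N ≥ 1; in particular ≻* is not irreflexive-transitive (it cannot be the strict part of any preorder). -/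
/-- Indicator vector of a subset of the five states (states 1,…,5 are `0,…,4 : Fin 5`). -/
def indVec (A : Finset (Fin 5)) : Fin 5 → ℤ := fun i => if i ∈ A then 1 else 0

/-- The Kraft–Pratt–Seidenberg comparisons force a cycle in any
translation-invariant relation on ℤ^S; in particular such a relation cannot be an
irreflexive transitive (strict) order. Here `s f g` means `f ≻* g`. -/
theorem stmt_8 (s : (Fin 5 → ℤ) → (Fin 5 → ℤ) → Prop)
    (hinv : ∀ f g h : Fin 5 → ℤ, s f g ↔ s (f + h) (g + h))
    (h1 : s (indVec {1, 2, 4}) (indVec {0, 3}))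
    (h2 : s (indVec {0, 4}) (indVec {1, 2}))
    (h3 : s (indVec {2, 3}) (indVec {1, 4}))
    (h4 : s (indVec {1}) (indVec {2, 4})) :
    (∃ n : ℕ, 1 ≤ n ∧ ∃ f : ℕ → (Fin 5 → ℤ), f n = f 0 ∧ ∀ i < n, s (f (i + 1)) (f i)) ∧
    ¬ ((∀ f g h, s f g → s g h → s f h) ∧ ∀ f, ¬ s f f) := by
  set g0 : Fin 5 → ℤ := ![1,0,0,1,0] with hg0
  set g1 : Fin 5 → ℤ := ![0,1,1,0,1] with hg1
  set g2 : Fin 5 → ℤ := ![1,0,0,0,2] with hg2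
  set g3 : Fin 5 → ℤ := ![1,-1,1,1,1] with hg3
  have e10 : s g1 g0 := by
    have e1 : indVec {1, 2, 4} = g1 := by funext i; fin_cases i <;> simp [indVec, hg1]
    have e0 : indVec {0, 3} = g0 := by funext i; fin_cases i <;> simp [indVec, hg0]
    rwa [e1, e0] at h1
  have e21 : s g2 g1 := by
    have := (hinv (indVec {0, 4}) (indVec {1, 2}) (![0,0,0,0,1])).mp h2
    have eA : indVec {0, 4} + ![0,0,0,0,1] = g2 := by
      funext i; fin_cases i <;> simp [indVec, hg2]
    have eB : indVec {1, 2} + ![0,0,0,0,1] = g1 := by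
      funext i; fin_cases i <;> simp [indVec, hg1]
    rwa [eA, eB] at this
  have e32 : s g3 g2 := by
    have := (hinv (indVec {2, 3}) (indVec {1, 4}) (![1,-1,0,0,1])).mp h3
    have eA : indVec {2, 3} + ![1,-1,0,0,1] = g3 := by
      funext i; fin_cases i <;> simp [indVec, hg3]
    have eB : indVec {1, 4} + ![1,-1,0,0,1] = g2 := by
      funext i; fin_cases i <;> simp [indVec, hg2]
    rwa [eA, eB] at this
  have e03 : s g0 g3 := by
    have := (hinv (indVec {1}) (indVec {2, 4}) (![1,-1,0,1,0])).mp h4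
    have eA : indVec {1} + ![1,-1,0,1,0] = g0 := by
      funext i; fin_cases i <;> simp [indVec, hg0]
    have eB : indVec {2, 4} + ![1,-1,0,1,0] = g3 := by
      funext i; fin_cases i <;> simp [indVec, hg3]
    rwa [eA, eB] at this
  constructor
  · refine ⟨4, by norm_num, fun n => if n % 4 = 0 then g0 else if n % 4 = 1 then g1
      else if n % 4 = 2 then g2 else g3, by norm_num, ?_⟩
    intro i hi
    interval_cases i <;> simpa using by first | exact e10 | exact e21 | exact e32 | exact e03
  · rintro ⟨htr, hirr⟩
    exact hirr g0 (htr _ _ _ (htr _ _ _ (htr _ _ _ e03 e32) e21) e10)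
end

section
/- (Strong acyclicity is necessary.) Let X be a set and M a monoid of transformations of X (not necessarily commutative). If the empty order pair ⟨∅, ∅⟩ belongs to F* (the closure of the set of forbidden subrelations under the collapse operation), then there exists no M-invariant complete transitive relation rationalizing the data ⟨≿ᴿ, ≻ᴿ⟩. -/
namespace Stmt11

variable {X : Type*}

/-- Strict transitive closure: a chain from `x` to `y` containing a strict link. -/
def sTC (w s : X → X → Prop) (x y : X) : Prop :=
  ∃ a b, Relation.ReflTransGen w x a ∧ s a b ∧ Relation.ReflTransGen w b y

/-- `⟨W, S⟩` is a forbidden subrelation for some broken cycle of the data `⟨w, s⟩`. -/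
def IsForbidden (M : Set (X → X)) (w s : X → X → Prop) (W S : Set (X × X)) : Prop :=
  ∃ n : ℕ, 0 < n ∧ ∃ (ω : ℕ → X → X) (x y : ℕ → X),
    (∀ i < n, ω i ∈ M) ∧
    (∀ i < n, ¬ w (x i) (y i) ∧ ¬ w (y i) (x i)) ∧
    (∀ i < n, Relation.ReflTransGen w (ω i (x i)) (ω ((i + 1) % n) (y ((i + 1) % n)))) ∧
    W = {p | ∃ i < n, p = (y i, x i)} ∧
    S ⊆ W ∧
    ((∃ i < n, sTC w s (ω i (x i)) (ω ((i + 1) % n) (y ((i + 1) % n)))) ∨ S.Nonempty)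

/-- `⟨W, S⟩` is the collapse of `⟨W₁, S₁⟩` and `⟨W₂, S₂⟩` along a mutually exhaustive
pair of comparisons. -/
def IsCollapse (M : Set (X → X)) (W1 S1 W2 S2 W S : Set (X × X)) : Prop :=
  ∃ ω ∈ M, ∃ ω' ∈ M, ∃ x y : X,
    (ω x, ω y) ∈ W1 \ S1 ∧ (ω' y, ω' x) ∈ W2 ∧
    W = (W1 \ {(ω x, ω y)}) ∪ (W2 \ {(ω' y, ω' x)}) ∧
    S = S1 ∪ (S2 \ {(ω' y, ω' x)})

/-- `F*`: the closure of the forbidden subrelations under the collapse operation. -/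
inductive FStar (M : Set (X → X)) (w s : X → X → Prop) : Set (X × X) → Set (X × X) → Prop
  | base {W S} : IsForbidden M w s W S → FStar M w s W S
  | collapse {W1 S1 W2 S2 W S} : FStar M w s W1 S1 → FStar M w s W2 S2 →
      IsCollapse M W1 S1 W2 S2 W S → FStar M w s W S

end Stmt11

/-- If the empty order pair belongs to F*, then the data ⟨w, s⟩ admit no
M-invariant complete transitive rationalization. -/
theorem stmt_11 {X : Type*} (M : Set (X → X))
    (hid : id ∈ M) (hcomp : ∀ ω ∈ M, ∀ ω' ∈ M, ω ∘ ω' ∈ M)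
    (w s : X → X → Prop) (hsub : ∀ x y, s x y → w x y) (hrefl : ∀ x, w x x)
    (hF : Stmt11.FStar M w s ∅ ∅) :
    ¬ ∃ R : X → X → Prop,
      (∀ x y, R x y ∨ R y x) ∧
      (∀ x y z, R x y → R y z → R x z) ∧
      (∀ x y, w x y → R x y) ∧
      (∀ x y, s x y → R x y ∧ ¬ R y x) ∧
      (∀ ω ∈ M, ∀ x y, (R x y → R (ω x) (ω y)) ∧
        (R x y ∧ ¬ R y x → R (ω x) (ω y) ∧ ¬ R (ω y) (ω x))) := by
  rintro ⟨R, hcompl, htrans, hwR, hsR, hinv⟩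
  have hRT : ∀ x y : X, Relation.ReflTransGen w x y → R x y := by
    intro x y h
    induction h with
    | refl => exact hwR _ _ (hrefl x)
    | tail _ h2 ih => exact htrans _ _ _ ih (hwR _ _ h2)
  have key : ∀ W S : Set (X × X), Stmt11.FStar M w s W S →
      ¬ (∀ p ∈ W, R p.1 p.2 ∧ (p ∈ S → ¬ R p.2 p.1)) := by
    intro W S hWS
    induction hWS with
    | @base W S h =>
      intro hall
      obtain ⟨n, hn, ω, x, y, hM, _hunrel, hchain, hWdef, hSsub, hlast⟩ := h
      set g : ℕ → X := fun i => ω (i % n) (x (i % n)) with hg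
      set f : ℕ → X := fun i => ω (i % n) (y (i % n)) with hf
      have hmodlt : ∀ i : ℕ, i % n < n := fun i => Nat.mod_lt i hn
      have chainR : ∀ i : ℕ, R (g i) (f (i + 1)) := by
        intro i
        have h1 := hchain (i % n) (hmodlt i)
        have h2 : (i % n + 1) % n = (i + 1) % n := Nat.mod_add_mod i n 1
        have h3 : (i % n) % n = i % n := Nat.mod_mod_of_dvd _ dvd_rfl
        have := hRT _ _ h1
        simpa [hg, hf, h2, h3] using this
      have hfg : ∀ i : ℕ, R (f i) (g i) := by
        intro i
        have hmem : (y (i % n), x (i % n)) ∈ W := by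
          rw [hWdef]; exact ⟨i % n, hmodlt i, rfl⟩
        have hR := (hall _ hmem).1
        exact (hinv _ (hM _ (hmodlt i)) _ _).1 hR
      -- A : R (g j) (f (j + k + 1))
      have A : ∀ j k : ℕ, R (g j) (f (j + k + 1)) := by
        intro j k
        induction k with
        | zero => simpa using chainR j
        | succ k ih =>
          have h1 : R (g j) (g (j + k + 1)) := htrans _ _ _ ih (hfg _)
          have h2 := chainR (j + k + 1)
          have : R (g j) (f (j + k + 1 + 1)) := htrans _ _ _ h1 h2
          simpa [Nat.add_assoc, Nat.add_comm, Nat.add_left_comm] using this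
      -- B : R (f j) (g (j + k))
      have B : ∀ j k : ℕ, R (f j) (g (j + k)) := by
        intro j k
        induction k with
        | zero => simpa using hfg j
        | succ k ih =>
          have h1 : R (f j) (f (j + k + 1)) := htrans _ _ _ ih (chainR _)
          have h2 := hfg (j + k + 1)
          have : R (f j) (g (j + k + 1)) := htrans _ _ _ h1 h2
          simpa [Nat.add_assoc] using this
      rcases hlast with ⟨i, hi, a, b, hga, hsab, hbf⟩ | ⟨p, hp⟩
      · -- strict link case
        have him : i % n = i := Nat.mod_eq_of_lt hi
        have h1 : R (g i) a := by
          have := hRT _ _ hga; simpa [hg, him] using this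
        have h2 : R b (f (i + 1)) := hRT _ _ hbf
        have h3 : R (f (i + 1)) (g (i + 1 + (n - 1))) := B (i + 1) (n - 1)
        have heq : (i + 1 + (n - 1)) % n = i % n := by
          have : i + 1 + (n - 1) = i + n := by omega
          rw [this, Nat.add_mod_right]
        have h3' : R (f (i + 1)) (g i) := by
          have : g (i + 1 + (n - 1)) = g i := by simp [hg, heq]
          rwa [this] at h3
        have hba : R b a := htrans _ _ _ h2 (htrans _ _ _ h3' h1)
        exact (hsR _ _ hsab).2 hba
      · -- nonempty S case
        obtain ⟨i, hi, rfl⟩ := by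
          have := hSsub hp; rw [hWdef] at this; exact this
        have hstrict := (hall _ (hSsub hp)).2 hp
        have hR := (hall _ (hSsub hp)).1
        have him : i % n = i := Nat.mod_eq_of_lt hi
        have hωs := (hinv _ (hM i hi) _ _).2 ⟨hR, hstrict⟩
        -- hωs : R (ω i (y i)) (ω i (x i)) ∧ ¬ R (ω i (x i)) (ω i (y i))
        have h4 : R (g i) (f (i + (n - 1) + 1)) := A i (n - 1)
        have heq : (i + (n - 1) + 1) % n = i % n := by
          have : i + (n - 1) + 1 = i + n := by omega
          rw [this, Nat.add_mod_right]
        have h4' : R (g i) (f i) := by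
          have : f (i + (n - 1) + 1) = f i := by simp [hf, heq]
          rwa [this] at h4
        have : R (ω i (x i)) (ω i (y i)) := by simpa [hg, hf, him] using h4'
        exact hωs.2 this
    | @collapse W1 S1 W2 S2 W S _ _ hc ih1 ih2 =>
      intro hall
      obtain ⟨ω, hω, ω', hω', x0, y0, hmem1, hmem2, hW, hS⟩ := hc
      have hnR : ¬ R (ω x0) (ω y0) := by
        intro hRxy
        apply ih1
        intro p hp
        by_cases hpe : p = (ω x0, ω y0)
        · subst hpe
          exact ⟨hRxy, fun hpS => absurd hpS hmem1.2⟩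
        · have hpW : p ∈ W := by rw [hW]; exact Or.inl ⟨hp, hpe⟩
          refine ⟨(hall p hpW).1, fun hpS => (hall p hpW).2 ?_⟩
          rw [hS]; exact Or.inl hpS
      have hnRxy : ¬ R x0 y0 := fun h => hnR ((hinv ω hω _ _).1 h)
      have hRyx : R y0 x0 := (hcompl x0 y0).resolve_left hnRxy
      have hωs := (hinv ω' hω' _ _).2 ⟨hRyx, hnRxy⟩
      apply ih2
      intro p hp
      by_cases hpe : p = (ω' y0, ω' x0)
      · subst hpe
        exact ⟨hωs.1, fun _ => hωs.2⟩
      · have hpW : p ∈ W := by rw [hW]; exact Or.inr ⟨hp, hpe⟩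
        refine ⟨(hall p hpW).1, fun hpS => (hall p hpW).2 ?_⟩
        rw [hS]; exact Or.inr ⟨hpS, hpe⟩
  exact key ∅ ∅ hF (by intro p hp; cases hp)
end

section
/- Let ⟨≿ᴿ, ≻ᴿ⟩ be the revealed preference relations of a finite price-consumption data set {(p_k, x_k)}_{k=1}^K in ℝ^{L-1}_+ × ℝ_+ with prices normalized to p_k = (p̃_k, 1), and let M be the monoid of numeraire translations (y,t) ↦ (y, t+α) for α ≥ 0. If the M-closure ⟨≿ᴿ_M, ≻ᴿ_M⟩ contains a cycle, then there exist indices k_0, ..., k_N with Σ_{i=0}^{N} p̃_{k_i} · (y_{k_{i+1}} − y_{k_i}) < 0 (indices mod N+1), where x_{k} = (y_k, t_k). -/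
namespace Stmt12

/-- Dot product on ℝ^L. -/
def dot {L : ℕ} (p q : Fin L → ℝ) : ℝ := ∑ i, p i * q i

end Stmt12

open Stmt12 in
lemma dot_sub' {L : ℕ} (p x y : Fin L → ℝ) : dot p (x - y) = dot p x - dot p y := by
  simp [dot, mul_sub, Finset.sum_sub_distrib]

open Stmt12 in
/-- For price-consumption data with numeraire-normalized prices and the
monoid of numeraire translations, a cycle in the M-closure yields a negative cycle
Σ p̃_{k_i}·(y_{k_{i+1}} − y_{k_i}) < 0 (Brown–Calsamiglia). -/
theorem stmt_12 {L K : ℕ} (pt : Fin K → Fin L → ℝ) (xd : Fin K → (Fin L → ℝ) × ℝ)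
    (hp : ∀ k i, 0 ≤ pt k i)
    (hx : ∀ k, (∀ i, 0 ≤ (xd k).1 i) ∧ 0 ≤ (xd k).2)
    (w s wM sM : ((Fin L → ℝ) × ℝ) → ((Fin L → ℝ) × ℝ) → Prop)
    (hw : ∀ u v, w u v ↔ ∃ k, u = xd k ∧ dot (pt k) v.1 + v.2 ≤ dot (pt k) u.1 + u.2)
    (hs : ∀ u v, s u v ↔ ∃ k, u = xd k ∧ dot (pt k) v.1 + v.2 < dot (pt k) u.1 + u.2)
    (hwM : ∀ u v, wM u v ↔ ∃ α : ℝ, 0 ≤ α ∧ ∃ u' v', w u' v' ∧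
      u = (u'.1, u'.2 + α) ∧ v = (v'.1, v'.2 + α))
    (hsM : ∀ u v, sM u v ↔ ∃ α : ℝ, 0 ≤ α ∧ ∃ u' v', s u' v' ∧
      u = (u'.1, u'.2 + α) ∧ v = (v'.1, v'.2 + α))
    (hcycle : ∃ a b, Relation.ReflTransGen wM a b ∧ sM b a) :
    ∃ N : ℕ, ∃ k : ℕ → Fin K,
      ∑ i ∈ Finset.range (N + 1),
        dot (pt (k i)) ((xd (k ((i + 1) % (N + 1)))).1 - (xd (k i)).1) < 0 := by
  obtain ⟨a, b, hab, hba⟩ := hcycle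
  have hwM' : ∀ u v, wM u v → ∃ k : Fin K, u.1 = (xd k).1 ∧
      dot (pt k) v.1 + v.2 ≤ dot (pt k) u.1 + u.2 := by
    intro u v huv
    rw [hwM] at huv
    obtain ⟨α, hα, u', v', hw', hu, hv⟩ := huv
    rw [hw] at hw'
    obtain ⟨k, hk, hineq⟩ := hw'
    refine ⟨k, by rw [hu, hk], ?_⟩
    subst hu hv hk
    simp only
    linarith
  have hsM' : ∃ k : Fin K, b.1 = (xd k).1 ∧
      dot (pt k) a.1 + a.2 < dot (pt k) b.1 + b.2 := by
    rw [hsM] at hba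
    obtain ⟨α, hα, u', v', hs', hu, hv⟩ := hba
    rw [hs] at hs'
    obtain ⟨k, hk, hineq⟩ := hs'
    refine ⟨k, by rw [hu, hk], ?_⟩
    subst hu hv hk
    simp only
    linarith
  obtain ⟨kn, hkn, hstrict⟩ := hsM'
  have chain : ∃ n : ℕ, ∃ u : ℕ → (Fin L → ℝ) × ℝ, ∃ k : ℕ → Fin K,
      u 0 = a ∧ u n = b ∧ ∀ j < n, (u j).1 = (xd (k j)).1 ∧
        dot (pt (k j)) (u (j+1)).1 + (u (j+1)).2 ≤ dot (pt (k j)) (u j).1 + (u j).2 := by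
    clear hstrict hkn hba
    induction hab with
    | refl => exact ⟨0, fun _ => a, fun _ => kn, rfl, rfl, by omega⟩
    | @tail b' c hab' hbc ih =>
      obtain ⟨n, u, k, h0, hn, hstep⟩ := ih
      obtain ⟨km, hkm, hineq⟩ := hwM' _ _ hbc
      refine ⟨n + 1, fun j => if j = n + 1 then c else u j,
        fun j => if j = n then km else k j, ?_, by simp, ?_⟩
      · simp only [if_neg (by omega : (0:ℕ) ≠ n+1)]; exact h0
      · intro j hj
        rcases lt_or_eq_of_le (Nat.lt_succ_iff.mp hj) with hj' | hj'
        · have h1 : j ≠ n + 1 := by omega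
          have h2 : j + 1 ≠ n + 1 := by omega
          have h3 : j ≠ n := by omega
          simp only [if_neg h1, if_neg h2, if_neg h3]
          exact hstep j hj'
        · subst hj'
          simp only [if_neg (by omega : j ≠ j + 1), if_pos rfl]
          rw [hn]
          exact ⟨hkm, hineq⟩
  obtain ⟨n, u, k, h0, hn, hstep⟩ := chain
  set kk : ℕ → Fin K := fun j => if j < n then k j else kn with hkk
  set v : ℕ → (Fin L → ℝ) × ℝ := fun j => if j ≤ n then u j else a with hv
  have hF : ∀ i ≤ n, (xd (kk i)).1 = (v i).1 := by
    intro i hi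
    rcases lt_or_eq_of_le hi with hi' | hi'
    · simp only [hkk, hv, if_pos hi', if_pos hi]
      exact ((hstep i hi').1).symm
    · subst hi'
      simp only [hkk, hv, if_neg (lt_irrefl i), if_pos le_rfl]
      rw [hn]; exact hkn.symm
  have hterm : ∀ i ∈ Finset.range (n + 1),
      dot (pt (kk i)) ((xd (kk ((i + 1) % (n + 1)))).1 - (xd (kk i)).1)
        = dot (pt (kk i)) ((v (i + 1)).1 - (v i).1) := by
    intro i hi
    rw [Finset.mem_range] at hi
    have hi' : i ≤ n := by omega
    rcases lt_or_eq_of_le hi' with h | h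
    · rw [Nat.mod_eq_of_lt (by omega), hF i hi', hF (i+1) (by omega)]
    · subst h
      have : (i + 1) % (i + 1) = 0 := Nat.mod_self _
      rw [this, hF i le_rfl, hF 0 (Nat.zero_le _)]
      have hv0 : v 0 = a := by simp only [hv, if_pos (Nat.zero_le _)]; exact h0
      have hv1 : v (i + 1) = a := by simp only [hv, if_neg (by omega : ¬ i + 1 ≤ i)]
      rw [hv0, hv1]
  refine ⟨n, kk, ?_⟩
  rw [Finset.sum_congr rfl hterm]
  have key : ∀ i ∈ Finset.range (n + 1),
      dot (pt (kk i)) ((v (i+1)).1 - (v i).1)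
        = (dot (pt (kk i)) (v (i+1)).1 + (v (i+1)).2 - (dot (pt (kk i)) (v i).1 + (v i).2))
          - ((v (i+1)).2 - (v i).2) := by
    intro i _
    rw [dot_sub']
    ring
  rw [Finset.sum_congr rfl key, Finset.sum_sub_distrib, Finset.sum_range_sub (fun j => (v j).2)]
  have hv0 : v 0 = a := by simp only [hv, if_pos (Nat.zero_le _)]; exact h0
  have hvn1 : v (n + 1) = a := by simp only [hv, if_neg (by omega : ¬ n + 1 ≤ n)]
  rw [hv0, hvn1, sub_self, sub_zero]
  have hlast : dot (pt (kk n)) (v (n+1)).1 + (v (n+1)).2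
      - (dot (pt (kk n)) (v n).1 + (v n).2) < 0 := by
    have hvi : v n = b := by simp only [hv, if_pos le_rfl]; exact hn
    have hki : kk n = kn := by simp only [hkk, if_neg (lt_irrefl n)]
    rw [hvi, hvn1, hki]
    linarith [hstrict]
  have : ∑ i ∈ Finset.range (n + 1),
      (dot (pt (kk i)) (v (i+1)).1 + (v (i+1)).2 - (dot (pt (kk i)) (v i).1 + (v i).2))
      < ∑ i ∈ Finset.range (n + 1), (0 : ℝ) := by
    apply Finset.sum_lt_sum
    · intro i hi
      rw [Finset.mem_range] at hi
      rcases lt_or_eq_of_le (Nat.lt_succ_iff.mp hi) with h | h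
      · have hvi : v i = u i := by simp only [hv, if_pos (by omega : i ≤ n)]
        have hvi1 : v (i+1) = u (i+1) := by simp only [hv, if_pos (by omega : i+1 ≤ n)]
        have hki : kk i = k i := by simp only [hkk, if_pos h]
        rw [hvi, hvi1, hki]
        linarith [(hstep i h).2]
      · subst h
        exact le_of_lt hlast
    · exact ⟨n, Finset.self_mem_range_succ n, hlast⟩
  simpa using this
end

section
/- Let ⟨≿ᴿ, ≻ᴿ⟩ be the revealed preference relations of a finite price-consumption data set {(p_k, x_k)}_{k=1}^K in ℝ^L_+ with prices normalized so p_k · x_k = 1, and let M be the monoid of scalings x ↦ αx for α > 0. If the M-closure ⟨≿ᴿ_M, ≻ᴿ_M⟩ contains a cycle, then there exist indices k_0, ..., k_N with ∏_{i=0}^{N} (p_{k_i} · x_{k_{i+1}}) < 1 (indices mod N+1). -/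
namespace Stmt13

/-- Dot product on ℝ^L. -/
def dot {L : ℕ} (p q : Fin L → ℝ) : ℝ := ∑ i, p i * q i

lemma dot_nonneg' {L : ℕ} {p q : Fin L → ℝ} (hp : ∀ i, 0 ≤ p i) (hq : ∀ i, 0 ≤ q i) :
    0 ≤ dot p q :=
  Finset.sum_nonneg fun i _ => mul_nonneg (hp i) (hq i)

lemma dot_smul_right {L : ℕ} (p v : Fin L → ℝ) (α : ℝ) :
    dot p (α • v) = α * dot p v := by
  simp only [dot, Pi.smul_apply, smul_eq_mul, Finset.mul_sum]
  exact Finset.sum_congr rfl fun i _ => by ring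

end Stmt13

open Stmt13 in
/-- For price-consumption data normalized so p_k · x_k = 1 and the monoid
of positive scalings, a cycle in the M-closure yields ∏ p_{k_i}·x_{k_{i+1}} < 1
(Varian's HARP violation). -/
theorem stmt_13 {L K : ℕ} (p : Fin K → Fin L → ℝ) (x : Fin K → Fin L → ℝ)
    (hp : ∀ k i, 0 ≤ p k i) (hx : ∀ k i, 0 ≤ x k i)
    (hnorm : ∀ k, dot (p k) (x k) = 1)
    (w s wM sM : (Fin L → ℝ) → (Fin L → ℝ) → Prop)
    (hw : ∀ u v, w u v ↔ ∃ k, u = x k ∧ dot (p k) v ≤ dot (p k) u)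
    (hs : ∀ u v, s u v ↔ ∃ k, u = x k ∧ dot (p k) v < dot (p k) u)
    (hwM : ∀ u v, wM u v ↔ ∃ α : ℝ, 0 < α ∧ ∃ u' v', w u' v' ∧ u = α • u' ∧ v = α • v')
    (hsM : ∀ u v, sM u v ↔ ∃ α : ℝ, 0 < α ∧ ∃ u' v', s u' v' ∧ u = α • u' ∧ v = α • v')
    (hcycle : ∃ a b, Relation.ReflTransGen wM a b ∧ sM b a) :
    ∃ N : ℕ, ∃ k : ℕ → Fin K,
      ∏ i ∈ Finset.range (N + 1), dot (p (k i)) (x (k ((i + 1) % (N + 1)))) < 1 := by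
  obtain ⟨a, b, hab, hba⟩ := hcycle
  -- Key chain lemma
  have chain : ∀ a b, Relation.ReflTransGen wM a b → ∀ β (m : Fin K), 0 < β →
      b = β • x m → ∃ n, ∃ k : ℕ → Fin K, ∃ α0, 0 < α0 ∧ a = α0 • x (k 0) ∧ k n = m ∧
        β * ∏ j ∈ Finset.range n, dot (p (k j)) (x (k (j+1))) ≤ α0 := by
    intro a b h
    induction h using Relation.ReflTransGen.head_induction_on with
    | refl =>
      intro β m hβ hb
      exact ⟨0, fun _ => m, β, hβ, hb, rfl, by simp⟩
    | head hstep _ ih =>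
      rename_i a c _
      intro β m hβ hb
      obtain ⟨n, k', α0', hα0', hc, hkm, hprod⟩ := ih β m hβ hb
      obtain ⟨α, hα, u', v', huv, ha, hcv⟩ := (hwM a c).mp hstep
      obtain ⟨k0, hu', hle⟩ := (hw u' v').mp huv
      have hdc : dot (p k0) c ≤ α := by
        rw [hcv, dot_smul_right]
        calc α * dot (p k0) v' ≤ α * dot (p k0) u' := by
              exact mul_le_mul_of_nonneg_left hle hα.le
          _ = α := by rw [hu', hnorm k0, mul_one]
      have hdc2 : dot (p k0) c = α0' * dot (p k0) (x (k' 0)) := by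
        rw [hc, dot_smul_right]
      refine ⟨n + 1, fun j => if j = 0 then k0 else k' (j - 1), α, hα, by simpa [hu'] using ha,
        by simpa using hkm, ?_⟩
      have hd0 : (0:ℝ) ≤ dot (p k0) (x (k' 0)) := dot_nonneg' (hp k0) (hx (k' 0))
      rw [Finset.prod_range_succ']
      simp only [Nat.add_sub_cancel, if_neg (Nat.succ_ne_zero _), if_pos rfl]
      calc β * ((∏ j ∈ Finset.range n, dot (p (k' j)) (x (k' (j+1)))) * dot (p k0) (x (k' 0)))
          = (β * ∏ j ∈ Finset.range n, dot (p (k' j)) (x (k' (j+1)))) * dot (p k0) (x (k' 0)) := by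
            ring
        _ ≤ α0' * dot (p k0) (x (k' 0)) := mul_le_mul_of_nonneg_right hprod hd0
        _ = dot (p k0) c := hdc2.symm
        _ ≤ α := hdc
  -- Use the strict step
  obtain ⟨β, hβ, u', v', huv, hbu, hav⟩ := (hsM b a).mp hba
  obtain ⟨m, hu', hlt⟩ := (hs u' v').mp huv
  have hb : b = β • x m := by rw [hbu, hu']
  obtain ⟨n, k, α0, hα0, ha, hkm, hprod⟩ := chain a b hab β m hβ hb
  -- strict inequality: dot (p m) a < β
  have hda : dot (p m) a < β := by
    rw [hav, dot_smul_right]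
    calc β * dot (p m) v' < β * dot (p m) u' := by
          exact mul_lt_mul_of_pos_left hlt hβ
      _ = β := by rw [hu', hnorm m, mul_one]
  have hda2 : dot (p m) a = α0 * dot (p m) (x (k 0)) := by rw [ha, dot_smul_right]
  refine ⟨n, k, ?_⟩
  have hd0 : (0:ℝ) ≤ dot (p m) (x (k 0)) := dot_nonneg' (hp m) (hx (k 0))
  have hsplit : ∏ i ∈ Finset.range (n + 1), dot (p (k i)) (x (k ((i + 1) % (n + 1))))
      = (∏ j ∈ Finset.range n, dot (p (k j)) (x (k (j+1)))) * dot (p m) (x (k 0)) := by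
    rw [Finset.prod_range_succ]
    congr 1
    · apply Finset.prod_congr rfl
      intro j hj
      rw [Finset.mem_range] at hj
      rw [Nat.mod_eq_of_lt (by omega)]
    · rw [hkm, Nat.mod_self]
  rw [hsplit]
  have key : β * ((∏ j ∈ Finset.range n, dot (p (k j)) (x (k (j+1)))) * dot (p m) (x (k 0))) < β := by
    calc β * ((∏ j ∈ Finset.range n, dot (p (k j)) (x (k (j+1)))) * dot (p m) (x (k 0)))
        = (β * ∏ j ∈ Finset.range n, dot (p (k j)) (x (k (j+1)))) * dot (p m) (x (k 0)) := by ring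
      _ ≤ α0 * dot (p m) (x (k 0)) := mul_le_mul_of_nonneg_right hprod hd0
      _ = dot (p m) a := hda2.symm
      _ < β := hda
  nlinarith
end

section
/- Let X be a set, M a commutative monoid of transformations of X, and ≿ a strongly M-invariant preorder on X. If ≿ is maximal (with respect to the extension order) among strongly M-invariant preorders on X, then ≿ is complete. -/
/-!
If `x` and `y` were incomparable, maximality applied to the smallest `M`-invariant preorder
containing `r` and `(x, y)` forces it to reverse some strict pair of `r`. Unwinding that reversal
gives a periodic sequence `α i ∈ M` with `α i y ≤ α (i + 1) x` for all `i`, the link at `i = 0`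
being strict. The pair `(y, x)` gives a second such sequence `β`, and by commutativity
`α i (β i x) ≤ α (i + 1) (β (i + 1) x)`. Going once around a common period and cancelling `β 1`
turns the strict link into `α 1 x ≤ α 0 y`.
-/

open Function Relation

namespace Relation.ReflTransGen

variable {α : Type*} {R : α → α → Prop} {a b : α}

theorem exists_nat_chain (h : ReflTransGen R a b) :
    ∃ (f : ℕ → α) (n : ℕ), f 0 = a ∧ f n = b ∧ ∀ i < n, R (f i) (f (i + 1)) := by
  induction h using ReflTransGen.head_induction_on with
  | refl => exact ⟨fun _ => b, 0, rfl, rfl, by simp⟩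
  | @head a c hac _ ih =>
    obtain ⟨f, n, rfl, rfl, hf⟩ := ih
    refine ⟨fun | 0 => a | i + 1 => f i, n + 1, rfl, rfl, ?_⟩
    rintro (_ | i) hi
    · exact hac
    · exact hf i (by omega)

theorem exists_periodic_chain (hab : ReflTransGen R a b) (hba : R b a) :
    ∃ (f : ℕ → α) (n : ℕ), 0 < n ∧ Periodic f n ∧ (∀ i, R (f i) (f (i + 1))) ∧
      f 0 = b ∧ f 1 = a := by
  obtain ⟨f, n, hf0, hfn, hf⟩ := hab.exists_nat_chain
  refine ⟨fun i => f ((i + n) % (n + 1)), n + 1, n.succ_pos, fun i => ?_, fun i => ?_, ?_, ?_⟩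
  · simp only [Nat.add_right_comm i, Nat.add_mod_right]
  · have hlt := Nat.mod_lt (i + n) (by omega : 0 < n + 1)
    simp only [Nat.add_right_comm i 1, ← Nat.mod_add_mod (i + n)]
    rcases (Nat.lt_succ_iff.mp hlt).lt_or_eq with hj | hj
    · rw [Nat.mod_eq_of_lt (by omega : (i + n) % (n + 1) + 1 < n + 1)]
      exact hf _ hj
    · rw [hj, Nat.mod_self, hf0, hfn]
      exact hba
  · simp [hfn]
  · simp [Nat.add_comm 1, hf0]

end Relation.ReflTransGen

namespace OrbitExtension

variable {X : Type*}

def Invariant (M : Set (X → X)) (r : X → X → Prop) : Prop :=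
  ∀ ω ∈ M, ∀ x y, r x y ↔ r (ω x) (ω y)

def StronglyInvariant (M : Set (X → X)) (r : X → X → Prop) : Prop :=
  ∀ ω ∈ M, ∀ x y, (r x y ↔ r (ω x) (ω y)) ∧
    ((r x y ∧ ¬ r y x) ↔ (r (ω x) (ω y) ∧ ¬ r (ω y) (ω x)))

def IsMaximalStronglyInvariant (M : Set (X → X)) (r : X → X → Prop) : Prop :=
  ∀ r' : X → X → Prop, (∀ x, r' x x) → (∀ x y z, r' x y → r' y z → r' x z) →
    StronglyInvariant M r' → (∀ x y, r x y → r' x y) →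
    (∀ x y, r x y → ¬ r y x → r' x y ∧ ¬ r' y x) → ∀ x y, r' x y ↔ r x y

theorem stronglyInvariant_iff_invariant {M : Set (X → X)} {r : X → X → Prop} :
    StronglyInvariant M r ↔ Invariant M r :=
  ⟨fun h ω hω x y => (h ω hω x y).1,
    fun h ω hω x y => ⟨h ω hω x y, by rw [h ω hω x y, h ω hω y x]⟩⟩

variable {M : Set (X → X)} {r : X → X → Prop} {u v : X}

def orbitStep (M : Set (X → X)) (r : X → X → Prop) (u v : X) (a b : X) : Prop :=
  r a b ∨ ∃ ω ∈ M, a = ω u ∧ b = ω v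

/-- Saturating the reachability relation of `orbitStep` over `M` makes invariance an `iff`. -/
def orbitExtension (M : Set (X → X)) (r : X → X → Prop) (u v : X) (a b : X) : Prop :=
  ∃ ρ ∈ M, ReflTransGen (orbitStep M r u v) (ρ a) (ρ b)

def orbitLink (M : Set (X → X)) (r : X → X → Prop) (u v : X) (ω ω' : X → X) : Prop :=
  ω ∈ M ∧ ω' ∈ M ∧ r (ω v) (ω' u)

section Extension

variable (hcomp : ∀ ω ∈ M, ∀ ω' ∈ M, ω ∘ ω' ∈ M)
  (hcomm : ∀ ω ∈ M, ∀ ω' ∈ M, ω ∘ ω' = ω' ∘ ω) (hinv : Invariant M r)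
include hcomp hinv

theorem reflTransGen_orbitStep_map {ω : X → X} (hω : ω ∈ M) {a b : X}
    (h : ReflTransGen (orbitStep M r u v) a b) :
    ReflTransGen (orbitStep M r u v) (ω a) (ω b) :=
  h.lift ω fun a b hab => hab.imp (hinv ω hω a b).1
    fun ⟨σ, hσ, ha, hb⟩ => ⟨ω ∘ σ, hcomp ω hω σ hσ, by rw [ha]; rfl, by rw [hb]; rfl⟩

include hcomm

theorem orbitExtension_trans {a b c : X} (hab : orbitExtension M r u v a b)
    (hbc : orbitExtension M r u v b c) : orbitExtension M r u v a c := by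
  obtain ⟨ρ, hρ, h₁⟩ := hab
  obtain ⟨σ, hσ, h₂⟩ := hbc
  have hρσ : ∀ z, ρ (σ z) = σ (ρ z) := congrFun (hcomm ρ hρ σ hσ)
  refine ⟨σ ∘ ρ, hcomp σ hσ ρ hρ, ?_⟩
  have h₂' := reflTransGen_orbitStep_map hcomp hinv hρ h₂
  rw [hρσ, hρσ] at h₂'
  exact (reflTransGen_orbitStep_map hcomp hinv hσ h₁).trans h₂'

theorem invariant_orbitExtension : Invariant M (orbitExtension M r u v) := by
  refine fun ω hω a b =>
    ⟨fun ⟨ρ, hρ, h⟩ => ⟨ρ, hρ, ?_⟩, fun ⟨ρ, hρ, h⟩ => ⟨ρ ∘ ω, hcomp ρ hρ ω hω, h⟩⟩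
  have hωρ : ∀ z, ω (ρ z) = ρ (ω z) := congrFun (hcomm ω hω ρ hρ)
  simpa only [hωρ] using reflTransGen_orbitStep_map hcomp hinv hω h

end Extension

theorem orbitExtension_refl (hid : id ∈ M) (a : X) : orbitExtension M r u v a a :=
  ⟨id, hid, .refl⟩

theorem orbitExtension_of_rel (hid : id ∈ M) {a b : X} (h : r a b) :
    orbitExtension M r u v a b :=
  ⟨id, hid, .single (.inl h)⟩

theorem orbitExtension_self (hid : id ∈ M) : orbitExtension M r u v u v :=
  ⟨id, hid, .single (.inr ⟨id, hid, rfl, rfl⟩)⟩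

section Cycles

variable [IsPreorder X r]

theorem rel_or_exists_orbitLink_of_reflTransGen {a b : X}
    (h : ReflTransGen (orbitStep M r u v) a b) :
    r a b ∨ ∃ ω ∈ M, ∃ ω' ∈ M,
      r a (ω u) ∧ ReflTransGen (orbitLink M r u v) ω ω' ∧ r (ω' v) b := by
  induction h with
  | refl => exact .inl (refl_of r a)
  | tail _ hbc ih =>
    rcases ih, hbc with ⟨hab | ⟨ω, hω, ω', hω', haω, hωω', hω'b⟩, hbc | ⟨σ, hσ, rfl, rfl⟩⟩
    · exact .inl (trans_of r hab hbc)
    · exact .inr ⟨σ, hσ, σ, hσ, hab, .refl, refl_of r _⟩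
    · exact .inr ⟨ω, hω, ω', hω', haω, hωω', trans_of r hω'b hbc⟩
    · exact .inr ⟨ω, hω, σ, hσ, haω, hωω'.tail ⟨hω', hσ, hω'b⟩, refl_of r _⟩

theorem exists_periodic_orbitLink_of_orbitExtension (hinv : Invariant M r) {p q : X}
    (hpq : r p q) (hqp : ¬ r q p) (h : orbitExtension M r u v q p) :
    ∃ (g : ℕ → X → X) (n : ℕ), 0 < n ∧ Periodic g n ∧
      (∀ i, orbitLink M r u v (g i) (g (i + 1))) ∧ ¬ r (g 1 u) (g 0 v) := by
  obtain ⟨ρ, hρ, hreach⟩ := h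
  have hpq' : r (ρ p) (ρ q) := (hinv ρ hρ p q).1 hpq
  have hqp' : ¬ r (ρ q) (ρ p) := fun h => hqp ((hinv ρ hρ q p).2 h)
  obtain h | ⟨ω, hω, ω', hω', hqω, hωω', hω'p⟩ := rel_or_exists_orbitLink_of_reflTransGen hreach
  · exact absurd h hqp'
  have hclose : orbitLink M r u v ω' ω := ⟨hω', hω, trans_of r hω'p (trans_of r hpq' hqω)⟩
  obtain ⟨g, n, hn, hg, hgl, hg0, hg1⟩ := hωω'.exists_periodic_chain hclose
  refine ⟨g, n, hn, hg, hgl, ?_⟩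
  rw [hg0, hg1]
  exact fun h => hqp' (trans_of r hqω (trans_of r h hω'p))

/-- Along a common period of the two cycles, `α i (β i x)` increases and comes back to
`α 0 (β 1 y)`; cancelling `β 1` reverses the link from `α 0` to `α 1`. -/
theorem rel_of_periodic_orbitLinks (hcomm : ∀ ω ∈ M, ∀ ω' ∈ M, ω ∘ ω' = ω' ∘ ω)
    (hinv : Invariant M r) {x y : X} {α β : ℕ → X → X} {n m : ℕ} (hn : 0 < n) (hm : 0 < m)
    (hα : Periodic α n) (hβ : Periodic β m) (hαl : ∀ i, orbitLink M r x y (α i) (α (i + 1)))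
    (hβl : ∀ i, orbitLink M r y x (β i) (β (i + 1))) :
    r (α 1 x) (α 0 y) := by
  have hαβ : ∀ i j z, α i (β j z) = β j (α i z) := fun i j =>
    congrFun (hcomm _ (hαl i).1 _ (hβl j).1)
  have hstep : ∀ i, r (α i (β i x)) (α (i + 1) (β (i + 1) x)) := fun i =>
    calc r (α i (β i x)) (α i (β (i + 1) y)) := (hinv _ (hαl i).1 _ _).1 (hβl i).2.2
      _ = β (i + 1) (α i y) := hαβ _ _ _
      r _ (β (i + 1) (α (i + 1) x)) := (hinv _ (hβl (i + 1)).1 _ _).1 (hαl i).2.2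
      _ = α (i + 1) (β (i + 1) x) := (hαβ _ _ _).symm
  have hαP : α (n * m) = α 0 := by simpa [mul_comm] using hα.nat_mul_eq m
  have hβP : β (n * m + 1) = β 1 := by simpa [add_comm] using hβ.nat_mul n 1
  have hchain : r (α 1 (β 1 x)) (α (n * m) (β (n * m) x)) :=
    Nat.rel_of_forall_rel_succ_of_le r hstep (Nat.mul_pos hn hm)
  have hlast : r (α (n * m) (β (n * m) x)) (α (n * m) (β (n * m + 1) y)) :=
    (hinv _ (hαl _).1 _ _).1 (hβl _).2.2
  have hend : α (n * m) (β (n * m + 1) y) = β 1 (α 0 y) := by rw [hαP, hβP, hαβ]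
  have hround := trans_of r hchain hlast
  rw [hend, hαβ] at hround
  exact (hinv _ (hβl 1).1 _ _).2 hround

theorem exists_periodic_orbitLink_of_not_rel (hid : id ∈ M)
    (hcomp : ∀ ω ∈ M, ∀ ω' ∈ M, ω ∘ ω' ∈ M) (hcomm : ∀ ω ∈ M, ∀ ω' ∈ M, ω ∘ ω' = ω' ∘ ω)
    (hinv : Invariant M r) (hmax : IsMaximalStronglyInvariant M r) (huv : ¬ r u v) :
    ∃ (g : ℕ → X → X) (n : ℕ), 0 < n ∧ Periodic g n ∧
      (∀ i, orbitLink M r u v (g i) (g (i + 1))) ∧ ¬ r (g 1 u) (g 0 v) := by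
  obtain ⟨p, q, hpq, hqp, hrev⟩ : ∃ p q, r p q ∧ ¬ r q p ∧ orbitExtension M r u v q p := by
    by_contra! hstrict
    exact huv ((hmax _ (orbitExtension_refl hid)
      (fun _ _ _ => orbitExtension_trans hcomp hcomm hinv)
      (stronglyInvariant_iff_invariant.2 (invariant_orbitExtension hcomp hcomm hinv))
      (fun _ _ => orbitExtension_of_rel hid)
      (fun p q h h' => ⟨orbitExtension_of_rel hid h, hstrict p q h h'⟩) u v).1
      (orbitExtension_self hid))
  exact exists_periodic_orbitLink_of_orbitExtension hinv hpq hqp hrev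

end Cycles

end OrbitExtension

/-- For a commutative monoid M of transformations, a strongly M-invariant
preorder that is maximal (w.r.t. the extension order) among strongly M-invariant
preorders is complete. -/
theorem stmt_17 {X : Type*} (M : Set (X → X))
    (hid : id ∈ M) (hcomp : ∀ ω ∈ M, ∀ ω' ∈ M, ω ∘ ω' ∈ M)
    (hcomm : ∀ ω ∈ M, ∀ ω' ∈ M, ω ∘ ω' = ω' ∘ ω)
    (r : X → X → Prop) (hrefl : ∀ x, r x x)
    (htrans : ∀ x y z, r x y → r y z → r x z)
    (hsinv : ∀ ω ∈ M, ∀ x y, (r x y ↔ r (ω x) (ω y)) ∧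
      ((r x y ∧ ¬ r y x) ↔ (r (ω x) (ω y) ∧ ¬ r (ω y) (ω x))))
    (hmax : ∀ r' : X → X → Prop,
      (∀ x, r' x x) → (∀ x y z, r' x y → r' y z → r' x z) →
      (∀ ω ∈ M, ∀ x y, (r' x y ↔ r' (ω x) (ω y)) ∧
        ((r' x y ∧ ¬ r' y x) ↔ (r' (ω x) (ω y) ∧ ¬ r' (ω y) (ω x)))) →
      (∀ x y, r x y → r' x y) → (∀ x y, r x y → ¬ r y x → r' x y ∧ ¬ r' y x) →
      ∀ x y, r' x y ↔ r x y) :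
    ∀ x y, r x y ∨ r y x := by
  have : IsPreorder X r := { refl := hrefl, trans := htrans }
  have hinv := OrbitExtension.stronglyInvariant_iff_invariant.1 hsinv
  by_contra! h
  obtain ⟨x, y, hxy, hyx⟩ := h
  obtain ⟨α, n, hn, hα, hαl, hαs⟩ :=
    OrbitExtension.exists_periodic_orbitLink_of_not_rel hid hcomp hcomm hinv hmax hxy
  obtain ⟨β, m, hm, hβ, hβl, -⟩ :=
    OrbitExtension.exists_periodic_orbitLink_of_not_rel hid hcomp hcomm hinv hmax hyx
  exact hαs (OrbitExtension.rel_of_periodic_orbitLinks hcomm hinv hn hm hα hβ hαl hβl)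
end

section
/- Let X = ℝ^S for a finite set S, and let ⟨≿ᴿ, ≻ᴿ⟩ be the revealed preference relations from a finite price-consumption data set {(p_k, x_k)} with p_k ∈ ℝ^S_{++} normalized so that ‖p_k‖₁ = 1, and let M be the monoid of constant translations x ↦ x + (α,...,α), α ∈ ℝ. If the M-closure ⟨≿ᴿ_M, ≻ᴿ_M⟩ contains a cycle, then there exist indices k_0,...,k_N with Σ_{i=0}^{N} p_{k_i} · (x_{k_{i+1}} − x_{k_i}) < 0 (indices mod N+1). -/
private lemma chain_of_rtg {X : Type*} {r : X → X → Prop} {a b : X}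
    (h : Relation.ReflTransGen r a b) :
    ∃ n, ∃ u : ℕ → X, u 0 = a ∧ u n = b ∧ ∀ i < n, r (u i) (u (i+1)) := by
  induction h with
  | refl => exact ⟨0, fun _ => a, rfl, rfl, by intro i hi; omega⟩
  | @tail b c _ hbc ih =>
    obtain ⟨n, u, h0, hn, hstep⟩ := ih
    refine ⟨n+1, fun i => if i ≤ n then u i else c, by simp [h0], by simp, ?_⟩
    intro i hi
    rcases lt_or_eq_of_le (Nat.lt_succ_iff.mp hi) with h | h
    · simpa [Nat.le_of_lt h, Nat.succ_le_of_lt h] using hstep i h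
    · subst h; simpa [hn] using hbc

private lemma cyc_sum (f : ℕ → ℝ) (n : ℕ) :
    ∑ i ∈ Finset.range (n+1), f ((i+1) % (n+1)) = ∑ i ∈ Finset.range (n+1), f i := by
  rw [Finset.sum_range_succ, Finset.sum_range_succ' f]
  congr 1
  · apply Finset.sum_congr rfl
    intro i hi
    simp only [Finset.mem_range] at hi
    rw [Nat.mod_eq_of_lt (by omega)]
  · rw [Nat.mod_self]

/-- For portfolio data with strictly positive, ℓ¹-normalized prices and
the monoid of constant translations, a cycle in the M-closure yields a negative cycle
Σ p_{k_i}·(x_{k_{i+1}} − x_{k_i}) < 0 (Chambers–Echenique–Saito). -/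
theorem stmt_18 {S : Type*} [Fintype S] {K : ℕ}
    (p : Fin K → S → ℝ) (x : Fin K → S → ℝ)
    (hp : ∀ k i, 0 < p k i) (hnorm : ∀ k, ∑ i, p k i = 1)
    (w s wM sM : (S → ℝ) → (S → ℝ) → Prop)
    (hw : ∀ u v, w u v ↔ ∃ k, u = x k ∧ ∑ i, p k i * v i ≤ ∑ i, p k i * u i)
    (hs : ∀ u v, s u v ↔ ∃ k, u = x k ∧ ∑ i, p k i * v i < ∑ i, p k i * u i)
    (hwM : ∀ u v, wM u v ↔ ∃ α : ℝ, ∃ u' v', w u' v' ∧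
      u = u' + (fun _ => α) ∧ v = v' + (fun _ => α))
    (hsM : ∀ u v, sM u v ↔ ∃ α : ℝ, ∃ u' v', s u' v' ∧
      u = u' + (fun _ => α) ∧ v = v' + (fun _ => α))
    (hcycle : ∃ a b, Relation.ReflTransGen wM a b ∧ sM b a) :
    ∃ N : ℕ, ∃ k : ℕ → Fin K,
      ∑ i ∈ Finset.range (N + 1),
        (∑ j, p (k i) j * (x (k ((i + 1) % (N + 1))) j - x (k i) j)) < 0 := by
  classical
  -- key arithmetic: prices sum to 1
  have key : ∀ (kk : Fin K) (c : ℝ) (v : S → ℝ),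
      ∑ j, p kk j * (v j + c) = (∑ j, p kk j * v j) + c := by
    intro kk c v
    simp [mul_add, Finset.sum_add_distrib, ← Finset.sum_mul, hnorm]
  have stepW : ∀ u v, wM u v → ∃ kk : Fin K, ∃ β : ℝ, u = x kk + (fun _ => β) ∧
      ∑ j, p kk j * v j ≤ ∑ j, p kk j * u j := by
    intro u v h
    rw [hwM] at h
    obtain ⟨β, u', v', hw', hu, hv⟩ := h
    rw [hw] at hw'
    obtain ⟨kk, hu', hle⟩ := hw'
    refine ⟨kk, β, by rw [hu, hu'], ?_⟩
    subst hu hv hu'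
    have h1 : ∑ j, p kk j * ((v' + (fun _ => (β:ℝ)) : S → ℝ) j) = (∑ j, p kk j * v' j) + β := by
      simpa using key kk β v'
    have h2 : ∑ j, p kk j * (((x kk) + (fun _ => (β:ℝ)) : S → ℝ) j) = (∑ j, p kk j * x kk j) + β := by
      simpa using key kk β (x kk)
    rw [h1, h2]
    linarith
  have stepS : ∀ u v, sM u v → ∃ kk : Fin K, ∃ β : ℝ, u = x kk + (fun _ => β) ∧
      ∑ j, p kk j * v j < ∑ j, p kk j * u j := by
    intro u v h
    rw [hsM] at h
    obtain ⟨β, u', v', hs', hu, hv⟩ := h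
    rw [hs] at hs'
    obtain ⟨kk, hu', hle⟩ := hs'
    refine ⟨kk, β, by rw [hu, hu'], ?_⟩
    subst hu hv hu'
    have h1 : ∑ j, p kk j * ((v' + (fun _ => (β:ℝ)) : S → ℝ) j) = (∑ j, p kk j * v' j) + β := by
      simpa using key kk β v'
    have h2 : ∑ j, p kk j * (((x kk) + (fun _ => (β:ℝ)) : S → ℝ) j) = (∑ j, p kk j * x kk j) + β := by
      simpa using key kk β (x kk)
    rw [h1, h2]
    linarith
  obtain ⟨a, b, hab, hba⟩ := hcycle
  obtain ⟨n, u, h0, hn, hstep⟩ := chain_of_rtg hab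
  obtain ⟨kn, βn, hbn, hltn⟩ := stepS b a hba
  have hch : ∀ i, ∃ kk : Fin K, ∃ β : ℝ, (i ≤ n → u i = x kk + (fun _ => β)) ∧
      (i < n → ∑ j, p kk j * u (i+1) j ≤ ∑ j, p kk j * u i j) ∧
      (i = n → ∑ j, p kk j * u 0 j < ∑ j, p kk j * u i j) := by
    intro i
    rcases lt_trichotomy i n with h | h | h
    · obtain ⟨kk, β, hrep, hle⟩ := stepW _ _ (hstep i h)
      exact ⟨kk, β, fun _ => hrep, fun _ => hle, fun he => absurd he (by omega)⟩
    · subst h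
      refine ⟨kn, βn, fun _ => by rw [hn]; exact hbn, fun h' => absurd h' (by omega),
        fun _ => ?_⟩
      rw [h0, hn]
      exact hltn
    · exact ⟨kn, 0, fun h' => absurd h' (by omega), fun h' => absurd h' (by omega),
        fun h' => absurd h' (by omega)⟩
  choose k β hrep hle hlt using hch
  refine ⟨n, k, ?_⟩
  have hx : ∀ i ≤ n, ∀ j, x (k i) j = u i j - β i := by
    intro i hi j
    have := congrFun (hrep i hi) j
    simp only [Pi.add_apply] at this
    linarith
  have hterm : ∀ i ∈ Finset.range (n+1),
      (∑ j, p (k i) j * (x (k ((i+1) % (n+1))) j - x (k i) j))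
      = (∑ j, p (k i) j * (u ((i+1) % (n+1)) j - u i j)) + (β i - β ((i+1) % (n+1))) := by
    intro i hi
    simp only [Finset.mem_range] at hi
    have hi' : i ≤ n := by omega
    have hσ : (i+1) % (n+1) ≤ n := Nat.lt_succ_iff.mp (Nat.mod_lt _ (by omega))
    have e : ∀ j, x (k ((i+1) % (n+1))) j - x (k i) j
        = (u ((i+1) % (n+1)) j - u i j) + (β i - β ((i+1) % (n+1))) := by
      intro j
      rw [hx _ hσ j, hx _ hi' j]
      ring
    rw [Finset.sum_congr rfl (fun j _ => by rw [e j])]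
    exact key _ _ _
  rw [Finset.sum_congr rfl hterm, Finset.sum_add_distrib, Finset.sum_sub_distrib,
    cyc_sum β n, sub_self, add_zero]
  have hD : ∑ i ∈ Finset.range (n+1), (∑ j, p (k i) j * (u ((i+1) % (n+1)) j - u i j))
      < ∑ i ∈ Finset.range (n+1), (0 : ℝ) := by
    apply Finset.sum_lt_sum
    · intro i hi
      simp only [Finset.mem_range] at hi
      rcases lt_or_eq_of_le (Nat.lt_succ_iff.mp hi) with h | h
      · have h' : (i+1) % (n+1) = i+1 := Nat.mod_eq_of_lt (by omega)
        rw [h']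
        have := hle i h
        simp only [mul_sub, Finset.sum_sub_distrib]
        linarith
      · subst h
        have h' : (i+1) % (i+1) = 0 := Nat.mod_self _
        rw [h']
        have := hlt i rfl
        simp only [mul_sub, Finset.sum_sub_distrib]
        linarith
    · refine ⟨n, Finset.self_mem_range_succ n, ?_⟩
      rw [Nat.mod_self]
      have := hlt n rfl
      simp only [mul_sub, Finset.sum_sub_distrib]
      linarith
  simpa using hD
end
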